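/- arXiv:2206.06567 — 5 statements merged into one kernel-verified Lean document; each statement's English description precedes it below -/
import Mathlib

section
/- Two partial permutations (I,J) and (I',J') of [n] have the same cycle-path type if and only if there exists a permutation w ∈ S_n with I' = w(I) and J' = w(J) (applying w entrywise to the lists). -/
/-- The successor of `v` in the graph of the partial permutation `(I,J)`:
`some j_t` if `v = i_t`, and `none` if `v` does not occur in `I`. -/
def nextV {n : ℕ} (I J : List (Fin n)) (v : Fin n) : Option (Fin n) :=
  ((I.zip J).find? (fun p => decide (p.1 = v))).map Prod.snd

/-- `m`-fold iteration of `nextV` starting from `v`. -/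
def iterV {n : ℕ} (I J : List (Fin n)) (m : ℕ) (v : Fin n) : Option (Fin n) :=
  (fun o => Option.bind o (nextV I J))^[m] (some v)

/-- `v` lies on a (directed) cycle of the graph of `(I,J)`. -/
def onCycle {n : ℕ} (I J : List (Fin n)) (v : Fin n) : Prop :=
  ∃ m : ℕ, 1 ≤ m ∧ iterV I J m v = some v

/-- `v` lies on a cycle of length exactly `m` of the graph of `(I,J)`. -/
def onCycleLen {n : ℕ} (I J : List (Fin n)) (v : Fin n) (m : ℕ) : Prop :=
  1 ≤ m ∧ iterV I J m v = some v ∧ ∀ l, 1 ≤ l → l < m → iterV I J l v ≠ some v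

/-- The number of vertices lying on cycles of length `m` (this equals `m · (#m-cycles)`). -/
noncomputable def cycVerts {n : ℕ} (I J : List (Fin n)) (m : ℕ) : ℕ :=
  Nat.card {v : Fin n // onCycleLen I J v m}

/-- The number of forward steps (plus one) available from `v`. -/
noncomputable def fwdCount {n : ℕ} (I J : List (Fin n)) (v : Fin n) : ℕ :=
  Nat.card {m : ℕ // m ≤ n ∧ (iterV I J m v).isSome}

/-- The number of vertices of the path component of a non-cyclic vertex `v`
(backwards steps are taken in the reversed graph, i.e. the graph of `(J,I)`). -/
noncomputable def pathSize {n : ℕ} (I J : List (Fin n)) (v : Fin n) : ℕ :=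
  fwdCount I J v + fwdCount J I v - 1

/-- The number of vertices lying on paths with exactly `m` vertices. -/
noncomputable def pathVerts {n : ℕ} (I J : List (Fin n)) (m : ℕ) : ℕ :=
  Nat.card {v : Fin n // ¬ onCycle I J v ∧ pathSize I J v = m}

/-- `(I,J)` and `(I',J')` have the same cycle-path type: for every `m`, they have the same
number of vertices on `m`-cycles and the same number of vertices on `m`-vertex paths. -/
def SameCyclePathType {n : ℕ} (I J I' J' : List (Fin n)) : Prop :=
  (∀ m, cycVerts I J m = cycVerts I' J' m) ∧ (∀ m, pathVerts I J m = pathVerts I' J' m)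

/-!
A partial permutation is a partial equivalence `e : Fin n ≃. Fin n`, and iterating
`o ↦ o.bind e` on `Option (Fin n)` walks along its graph. Give every component an anchor: the
first vertex of a path, the least vertex of a cycle. A vertex is then determined by the type of
its component (cycle or path, and size), its anchor and its distance from the anchor, and in
these coordinates `e` becomes a successor map `shift` that only sees the type and the distance.
Partial permutations of the same cycle-path type have equally many anchors of each type, and a
type-preserving bijection between their anchors, kept fixed on distances, conjugates one into
the other. Conversely, conjugation preserves the type of every component.
-/

namespace PEquiv

open Function

variable {α β : Type*}

def onOption (e : α ≃. α) : Option α → Option α := fun o => o.bind e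

section Iterate

variable (e : α ≃. α)

@[simp] theorem onOption_some (a : α) : e.onOption (some a) = e a := rfl

@[simp] theorem onOption_none : e.onOption none = none := rfl

@[simp] theorem iterate_onOption_none (k : ℕ) : e.onOption^[k] none = none :=
  iterate_fixed (onOption_none e) k

variable {e}

theorem iterate_onOption_eq_none_of_le {x : Option α} {i j : ℕ}
    (h : e.onOption^[i] x = none) (hij : i ≤ j) : e.onOption^[j] x = none := by
  rw [← Nat.sub_add_cancel hij, iterate_add_apply, h, iterate_onOption_none]

theorem iterate_onOption_eq_none_of_lt {x : Option α} {a : α} {i j : ℕ}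
    (h : e.onOption^[i] x = some a) (ha : e a = none) (hij : i < j) : e.onOption^[j] x = none :=
  iterate_onOption_eq_none_of_le (by rw [iterate_succ_apply', h, onOption_some, ha]) hij

theorem iterate_onOption_eq_some_iff_symm {k : ℕ} {a b : α} :
    e.onOption^[k] (some a) = some b ↔ e.symm.onOption^[k] (some b) = some a := by
  induction k generalizing a with
  | zero => simp [eq_comm]
  | succ k ih =>
    rw [iterate_succ_apply, iterate_succ_apply', onOption_some]
    cases h : e a with
    | none =>
      simp only [iterate_onOption_none, reduceCtorEq, false_iff]
      intro h'
      obtain ⟨c, -, hc⟩ := Option.bind_eq_some_iff.1 h'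
      simp [(eq_some_iff e).1 hc] at h
    | some c =>
      simp only [ih, onOption, Option.bind_eq_some_iff, eq_some_iff, h, Option.some_inj]
      exact ⟨fun hc => ⟨c, hc, rfl⟩, by rintro ⟨d, hd, rfl⟩; exact hd⟩

end Iterate

def IsCyclic (e : α ≃. α) (a : α) : Prop :=
  some a ∈ periodicPts e.onOption

variable {e : α ≃. α} {a b : α} {k : ℕ}

theorem IsCyclic.of_iterate_eq_some (ha : e.IsCyclic a) (h : e.onOption^[k] (some a) = some b) :
    e.IsCyclic b := by
  obtain ⟨p, hp, hper⟩ := ha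
  exact ⟨p, hp, h ▸ hper.apply_iterate k⟩

theorem isCyclic_symm_iff : e.symm.IsCyclic a ↔ e.IsCyclic a :=
  exists_congr fun _ => and_congr_right fun _ => e.symm.iterate_onOption_eq_some_iff_symm

theorem isCyclic_iff_of_iterate_eq_some (h : e.onOption^[k] (some a) = some b) :
    e.IsCyclic a ↔ e.IsCyclic b :=
  ⟨fun ha => ha.of_iterate_eq_some h, fun hb => isCyclic_symm_iff.1 <|
    (isCyclic_symm_iff.2 hb).of_iterate_eq_some (iterate_onOption_eq_some_iff_symm.1 h)⟩

theorem IsCyclic.exists_iterate_eq_some (ha : e.IsCyclic a)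
    (h : e.onOption^[k] (some a) = some b) : ∃ j, e.onOption^[j] (some b) = some a := by
  obtain ⟨p, hp, hper⟩ := ha
  refine ⟨p * k - k, ?_⟩
  rw [← h, ← iterate_add_apply, Nat.sub_add_cancel (Nat.le_mul_of_pos_left k hp)]
  exact hper.mul_const k

theorem IsCyclic.iterate_ne_none (ha : e.IsCyclic a) (k : ℕ) :
    e.onOption^[k] (some a) ≠ none := by
  intro h
  obtain ⟨p, hp, hper⟩ := ha
  have := hper.mul_const k
  rw [IsPeriodicPt, IsFixedPt, iterate_onOption_eq_none_of_le h (Nat.le_mul_of_pos_left k hp)]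
    at this
  simp at this

theorem iterate_card_succ_eq_none [Fintype α] (ha : ¬ e.IsCyclic a) :
    e.onOption^[Fintype.card α + 1] (some a) = none := by
  obtain ⟨i, j, hne, hij⟩ := Fintype.exists_ne_map_eq_of_card_lt
    (fun k : Fin (Fintype.card α + 2) => e.onOption^[k] (some a)) (by simp)
  wlog hlt : i < j generalizing i j
  · exact this j i hne.symm hij.symm (lt_of_le_of_ne (not_lt.1 hlt) hne.symm)
  cases hx : e.onOption^[i] (some a) with
  | none => exact iterate_onOption_eq_none_of_le hx (by omega)
  | some u =>
    have hu : e.IsCyclic u := by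
      refine ⟨j - i, by omega, ?_⟩
      rw [IsPeriodicPt, IsFixedPt, ← hx, ← iterate_add_apply, Nat.sub_add_cancel hlt.le]
      exact hij.symm
    exact absurd ((isCyclic_iff_of_iterate_eq_some hx).2 hu) ha

/-- For `a` off the cycles, the number of vertices `a, e a, e (e a), …`; it is `0` on cycles. -/
noncomputable def forwardLength (e : α ≃. α) (a : α) : ℕ :=
  sInf {k | e.onOption^[k] (some a) = none}

theorem forwardLength_eq_of_iff {m : ℕ} (h : ∀ k, e.onOption^[k] (some a) = none ↔ m ≤ k) :
    e.forwardLength a = m := by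
  rw [forwardLength, show {k | e.onOption^[k] (some a) = none} = Set.Ici m from Set.ext h,
    csInf_Ici]

theorem forwardLength_eq_one (ha : e a = none) : e.forwardLength a = 1 :=
  forwardLength_eq_of_iff fun k => by
    rcases k with _ | k
    · simp
    · simpa using iterate_onOption_eq_none_of_le (x := some a) (i := 1) (j := k + 1) ha (by omega)

section Fintype

variable [Fintype α]

theorem iterate_eq_none_iff_forwardLength_le (ha : ¬ e.IsCyclic a) :
    e.onOption^[k] (some a) = none ↔ e.forwardLength a ≤ k :=
  ⟨fun h => Nat.sInf_le h, iterate_onOption_eq_none_of_le <|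
    Nat.sInf_mem (s := {k | e.onOption^[k] (some a) = none})
      ⟨_, iterate_card_succ_eq_none ha⟩⟩

theorem forwardLength_le_card_succ (ha : ¬ e.IsCyclic a) :
    e.forwardLength a ≤ Fintype.card α + 1 :=
  Nat.sInf_le (iterate_card_succ_eq_none ha)

theorem forwardLength_pos (ha : ¬ e.IsCyclic a) : 0 < e.forwardLength a := by
  by_contra! h
  simpa using (iterate_eq_none_iff_forwardLength_le (k := 0) ha).2 h

end Fintype

open scoped Classical in
noncomputable def componentSize (e : α ≃. α) (a : α) : ℕ :=
  if e.IsCyclic a then minimalPeriod e.onOption (some a)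
  else e.forwardLength a + e.symm.forwardLength a - 1

open scoped Classical in
noncomputable def componentType (e : α ≃. α) (a : α) : Bool × ℕ :=
  (decide (e.IsCyclic a), e.componentSize a)

theorem componentSize_of_isCyclic (ha : e.IsCyclic a) :
    e.componentSize a = minimalPeriod e.onOption (some a) :=
  if_pos ha

theorem componentSize_of_not_isCyclic (ha : ¬ e.IsCyclic a) :
    e.componentSize a = e.forwardLength a + e.symm.forwardLength a - 1 :=
  if_neg ha

theorem componentSize_pos [Fintype α] (a : α) : 0 < e.componentSize a := by
  by_cases ha : e.IsCyclic a
  · rw [componentSize_of_isCyclic ha]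
    exact minimalPeriod_pos_of_mem_periodicPts ha
  · have := forwardLength_pos ha
    have := forwardLength_pos (isCyclic_symm_iff.not.2 ha)
    rw [componentSize_of_not_isCyclic ha]
    omega

section Conj

variable {e' : β ≃. β} {w : α ≃ β}

theorem semiconj_onOption (hw : ∀ a, e' (w a) = (e a).map w) :
    Semiconj (Option.map w) e.onOption e'.onOption := by
  rintro (_ | a)
  · rfl
  · exact (hw a).symm

theorem symm_conj (hw : ∀ a, e' (w a) = (e a).map w) (b : α) :
    e'.symm (w b) = (e.symm b).map w := by
  refine Option.ext fun y => ?_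
  obtain ⟨a, rfl⟩ := w.surjective y
  rw [eq_some_iff, hw, ← Option.map_some, (Option.map_injective w.injective).eq_iff,
    ← eq_some_iff, ← Option.map_some, (Option.map_injective w.injective).eq_iff]

theorem iterate_onOption_conj (hw : ∀ a, e' (w a) = (e a).map w) (k : ℕ) (a : α) :
    e'.onOption^[k] (some (w a)) = (e.onOption^[k] (some a)).map w :=
  ((semiconj_onOption hw).iterate_right k (some a)).symm

theorem isPeriodicPt_conj_iff (hw : ∀ a, e' (w a) = (e a).map w) :
    IsPeriodicPt e'.onOption k (some (w a)) ↔ IsPeriodicPt e.onOption k (some a) := by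
  rw [IsPeriodicPt, IsFixedPt, iterate_onOption_conj hw, ← Option.map_some,
    (Option.map_injective w.injective).eq_iff]
  rfl

theorem componentType_conj (hw : ∀ a, e' (w a) = (e a).map w) (a : α) :
    e'.componentType (w a) = e.componentType a := by
  have hcyc : e'.IsCyclic (w a) ↔ e.IsCyclic a :=
    exists_congr fun _ => and_congr_right fun _ => isPeriodicPt_conj_iff hw
  have hlen {f : α ≃. α} {f' : β ≃. β} (hf : ∀ a, f' (w a) = (f a).map w) :
      f'.forwardLength (w a) = f.forwardLength a := by
    simp only [forwardLength, iterate_onOption_conj hf, Option.map_eq_none_iff]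
  by_cases ha : e.IsCyclic a
  · simp [componentType, componentSize_of_isCyclic ha, componentSize_of_isCyclic (hcyc.2 ha), ha,
      hcyc, minimalPeriod_eq_minimalPeriod_iff.2 fun _ => isPeriodicPt_conj_iff hw]
  · simp [componentType, componentSize_of_not_isCyclic ha,
      componentSize_of_not_isCyclic (hcyc.not.2 ha), ha, hcyc, hlen hw, hlen (symm_conj hw)]

end Conj

section Anchor

variable [LinearOrder α]

def IsAnchor (e : α ≃. α) (a : α) : Prop :=
  (e.IsCyclic a → ∀ k b, e.onOption^[k] (some a) = some b → a ≤ b) ∧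
    (¬ e.IsCyclic a → e.symm a = none)

theorem componentSize_of_isAnchor_of_not_isCyclic (ha : e.IsAnchor a) (hc : ¬ e.IsCyclic a) :
    e.componentSize a = e.forwardLength a := by
  rw [componentSize_of_not_isCyclic hc, forwardLength_eq_one (ha.2 hc), Nat.add_sub_cancel]

theorem IsAnchor.iterate_ne_none [Fintype α] (ha : e.IsAnchor a) (hk : k < e.componentSize a) :
    e.onOption^[k] (some a) ≠ none := by
  by_cases hc : e.IsCyclic a
  · exact hc.iterate_ne_none k
  · rw [componentSize_of_isAnchor_of_not_isCyclic ha hc] at hk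
    rwa [Ne, iterate_eq_none_iff_forwardLength_le hc, not_le]

theorem IsAnchor.iterate_componentSize [Fintype α] (ha : e.IsAnchor a) (hc : ¬ e.IsCyclic a) :
    e.onOption^[e.componentSize a] (some a) = none := by
  rw [componentSize_of_isAnchor_of_not_isCyclic ha hc, iterate_eq_none_iff_forwardLength_le hc]

theorem exists_isAnchor_of_isCyclic [Fintype α] (hb : e.IsCyclic b) :
    ∃ a, e.IsAnchor a ∧ ∃ i < e.componentSize a, e.onOption^[i] (some a) = some b := by
  obtain ⟨a, ⟨j, hj⟩, hmin⟩ :=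
    wellFounded_lt.has_min {a | ∃ j, e.onOption^[j] (some b) = some a} ⟨b, 0, rfl⟩
  have ha : e.IsCyclic a := hb.of_iterate_eq_some hj
  refine ⟨a, ⟨fun _ k c hc => not_lt.1 (hmin c ⟨k + j, ?_⟩), fun h => absurd ha h⟩, ?_⟩
  · rw [iterate_add_apply, hj, hc]
  obtain ⟨i, hi⟩ := hb.exists_iterate_eq_some hj
  refine ⟨i % minimalPeriod e.onOption (some a), ?_, by rwa [iterate_mod_minimalPeriod_eq]⟩
  rw [componentSize_of_isCyclic ha]
  exact Nat.mod_lt _ (minimalPeriod_pos_of_mem_periodicPts ha)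

theorem exists_isAnchor_of_not_isCyclic [Fintype α] (hb : ¬ e.IsCyclic b) :
    ∃ a, e.IsAnchor a ∧ ∃ i < e.componentSize a, e.onOption^[i] (some a) = some b := by
  have hb' : ¬ e.symm.IsCyclic b := isCyclic_symm_iff.not.2 hb
  set d := e.symm.forwardLength b
  have hd := forwardLength_pos hb'
  obtain ⟨a, ha⟩ := Option.ne_none_iff_exists'.1 <|
    (iterate_eq_none_iff_forwardLength_le hb' (k := d - 1)).not.2 (by omega)
  have hback : e.symm a = none := by
    have : e.symm.onOption^[d - 1 + 1] (some b) = none := by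
      rw [Nat.sub_add_cancel hd, iterate_eq_none_iff_forwardLength_le hb']
    rwa [iterate_succ_apply', ha] at this
  have hfwd : e.onOption^[d - 1] (some a) = some b := iterate_onOption_eq_some_iff_symm.2 ha
  have hc : ¬ e.IsCyclic a := (isCyclic_iff_of_iterate_eq_some hfwd).not.2 hb
  have hanchor : e.IsAnchor a := ⟨fun h => absurd h hc, fun _ => hback⟩
  refine ⟨a, hanchor, d - 1, ?_, hfwd⟩
  rw [componentSize_of_isAnchor_of_not_isCyclic hanchor hc, ← not_le,
    ← iterate_eq_none_iff_forwardLength_le hc, hfwd]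
  exact Option.some_ne_none b

theorem exists_isAnchor_iterate_eq_some [Fintype α] (b : α) :
    ∃ a, e.IsAnchor a ∧ ∃ i < e.componentSize a, e.onOption^[i] (some a) = some b := by
  by_cases hb : e.IsCyclic b
  · exact exists_isAnchor_of_isCyclic hb
  · exact exists_isAnchor_of_not_isCyclic hb

theorem IsAnchor.eq_of_iterate_eq_some {a' : α} {i j : ℕ} (ha : e.IsAnchor a)
    (ha' : e.IsAnchor a') (hi : i < e.componentSize a) (hj : j < e.componentSize a')
    (h : e.onOption^[i] (some a) = some b) (h' : e.onOption^[j] (some a') = some b) :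
    a = a' ∧ i = j := by
  by_cases hb : e.IsCyclic b
  · have hc : e.IsCyclic a := (isCyclic_iff_of_iterate_eq_some h).2 hb
    have hc' : e.IsCyclic a' := (isCyclic_iff_of_iterate_eq_some h').2 hb
    -- on a cycle each anchor is reachable from the other, so each is `≤` the other
    have hle {a a' : α} {i j : ℕ} (ha : e.IsAnchor a) (hc' : e.IsCyclic a')
        (h : e.onOption^[i] (some a) = some b) (h' : e.onOption^[j] (some a') = some b) :
        a ≤ a' := by
      obtain ⟨k, hk⟩ := hc'.exists_iterate_eq_some h'
      exact ha.1 ((isCyclic_iff_of_iterate_eq_some h).2 hb) (k + i) a'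
        (by rw [iterate_add_apply, h, hk])
    obtain rfl : a = a' := le_antisymm (hle ha hc' h h') (hle ha' hc h' h)
    rw [componentSize_of_isCyclic hc] at hi hj
    exact ⟨rfl, iterate_injOn_Iio_minimalPeriod hi hj (h.trans h'.symm)⟩
  · -- both `i` and `j` are the distance from `b` back to the first vertex of its path
    have hc : ¬ e.IsCyclic a := (isCyclic_iff_of_iterate_eq_some h).not.2 hb
    have hc' : ¬ e.IsCyclic a' := (isCyclic_iff_of_iterate_eq_some h').not.2 hb
    have hback := iterate_onOption_eq_some_iff_symm.1 h
    have hback' := iterate_onOption_eq_some_iff_symm.1 h'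
    have hij : i = j := by
      by_contra hne
      rcases Nat.lt_or_gt_of_ne hne with hlt | hlt
      · simp [iterate_onOption_eq_none_of_lt hback (ha.2 hc) hlt] at hback'
      · simp [iterate_onOption_eq_none_of_lt hback' (ha'.2 hc') hlt] at hback
    subst hij
    exact ⟨Option.some_injective _ (hback.symm.trans hback'), rfl⟩

theorem IsAnchor.componentType_iterate [Fintype α] {i : ℕ} (ha : e.IsAnchor a)
    (hi : i < e.componentSize a) (h : e.onOption^[i] (some a) = some b) :
    e.componentType b = e.componentType a := by
  have hcyc := isCyclic_iff_of_iterate_eq_some h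
  by_cases hc : e.IsCyclic a
  · simp only [componentType, componentSize_of_isCyclic hc, componentSize_of_isCyclic (hcyc.1 hc),
      ← h, minimalPeriod_apply_iterate hc, hc, hcyc.1 hc]
  have hb : ¬ e.IsCyclic b := hcyc.not.1 hc
  rw [componentSize_of_isAnchor_of_not_isCyclic ha hc] at hi
  have hfwd : e.forwardLength b = e.forwardLength a - i := forwardLength_eq_of_iff fun k => by
    rw [← h, ← iterate_add_apply, iterate_eq_none_iff_forwardLength_le hc]
    omega
  have hback : e.symm.forwardLength b = i + 1 := forwardLength_eq_of_iff fun k => by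
    have h' := iterate_onOption_eq_some_iff_symm.1 h
    refine ⟨fun hk => ?_, iterate_onOption_eq_none_of_lt h' (ha.2 hc)⟩
    by_contra! hki
    simp [iterate_onOption_eq_none_of_le hk (Nat.le_of_lt_succ hki)] at h'
  simp only [componentType, componentSize_of_not_isCyclic hb,
    componentSize_of_isAnchor_of_not_isCyclic ha hc, hfwd, hback, hb, hc, Prod.mk.injEq, true_and]
  omega

end Anchor

/-- The successor map of a disjoint union of standard cycles (`κ.1 = true`) and standard paths
(`κ.1 = false`) on `κ.2` vertices, with one copy for each element of `X κ`. -/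
def shift {X : Bool × ℕ → Type*} :
    (Σ κ : Bool × ℕ, X κ × Fin κ.2) → Option (Σ κ : Bool × ℕ, X κ × Fin κ.2)
  | ⟨κ, x, i⟩ =>
    if h : i.1 + 1 < κ.2 then some ⟨κ, x, ⟨i + 1, h⟩⟩
    else if κ.1 then some ⟨κ, x, ⟨0, by omega⟩⟩ else none

theorem shift_sigmaCongrRight {X Y : Bool × ℕ → Type*} (E : ∀ κ, X κ ≃ Y κ)
    (x : Σ κ : Bool × ℕ, X κ × Fin κ.2) :
    shift (Equiv.sigmaCongrRight (fun κ => (E κ).prodCongr (Equiv.refl _)) x) =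
      (shift x).map (Equiv.sigmaCongrRight fun κ => (E κ).prodCongr (Equiv.refl _)) := by
  obtain ⟨κ, x, i⟩ := x
  change shift ⟨κ, (E κ x, i)⟩ = (shift ⟨κ, (x, i)⟩).map _
  simp only [shift]
  split_ifs <;> rfl

section Coord

variable [LinearOrder α] [Fintype α] (e)

abbrev Coord : Type _ :=
  Σ κ : Bool × ℕ, {a // e.IsAnchor a ∧ e.componentType a = κ} × Fin κ.2

theorem isSome_iterate_coord (x : e.Coord) : (e.onOption^[x.2.2] (some x.2.1.1)).isSome := by
  obtain ⟨κ, ⟨a, ha, rfl⟩, i⟩ := x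
  exact Option.isSome_iff_ne_none.2 (ha.iterate_ne_none i.2)

noncomputable def fromCoord (x : e.Coord) : α :=
  (e.onOption^[x.2.2] (some x.2.1.1)).get (e.isSome_iterate_coord x)

variable {e}

theorem iterate_eq_some_fromCoord {κ : Bool × ℕ}
    (a : {a // e.IsAnchor a ∧ e.componentType a = κ}) (i : Fin κ.2) :
    e.onOption^[i] (some a.1) = some (e.fromCoord ⟨κ, a, i⟩) :=
  (Option.some_get _).symm

theorem fromCoord_bijective : Function.Bijective e.fromCoord := by
  constructor
  · rintro ⟨κ, ⟨a, ha, rfl⟩, i⟩ ⟨κ', ⟨a', ha', rfl⟩, j⟩ h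
    obtain ⟨rfl, hij⟩ := ha.eq_of_iterate_eq_some ha' i.2 j.2
      (iterate_eq_some_fromCoord ⟨a, ha, rfl⟩ i)
      ((iterate_eq_some_fromCoord ⟨a', ha', rfl⟩ j).trans (congrArg some h.symm))
    obtain rfl := Fin.ext hij
    rfl
  · intro b
    obtain ⟨a, ha, i, hi, h⟩ := exists_isAnchor_iterate_eq_some (e := e) b
    exact ⟨⟨_, ⟨a, ha, rfl⟩, ⟨i, hi⟩⟩,
      Option.some_injective _ ((iterate_eq_some_fromCoord _ _).symm.trans h)⟩

theorem componentType_fromCoord (x : e.Coord) : e.componentType (e.fromCoord x) = x.1 := by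
  obtain ⟨κ, ⟨a, ha, rfl⟩, i⟩ := x
  exact ha.componentType_iterate i.2 (iterate_eq_some_fromCoord ⟨a, ha, rfl⟩ i)

theorem apply_fromCoord (x : e.Coord) : e (e.fromCoord x) = (shift x).map e.fromCoord := by
  obtain ⟨κ, ⟨a, ha, rfl⟩, i⟩ := x
  have hnext : e (e.fromCoord ⟨_, ⟨a, ha, rfl⟩, i⟩) = e.onOption^[i + 1] (some a) := by
    rw [← onOption_some, ← iterate_eq_some_fromCoord ⟨a, ha, rfl⟩ i,
      ← iterate_succ_apply' e.onOption]
  rw [hnext, shift]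
  split_ifs with hi hc
  · exact iterate_eq_some_fromCoord ⟨a, ha, rfl⟩ ⟨i + 1, hi⟩
  all_goals
    have hsize : i.1 + 1 = e.componentSize a := le_antisymm i.2 (not_lt.1 hi)
    rw [hsize]
  · have hc : e.IsCyclic a := by simpa [componentType] using hc
    rw [Option.map_some, ← iterate_eq_some_fromCoord ⟨a, ha, rfl⟩,
      componentSize_of_isCyclic hc, iterate_minimalPeriod]
    rfl
  · have hc : ¬ e.IsCyclic a := by simpa [componentType] using hc
    rw [Option.map_none, ha.iterate_componentSize hc]

variable (e)

theorem card_componentType_eq (κ : Bool × ℕ) :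
    Nat.card {b // e.componentType b = κ} =
      Nat.card {a // e.IsAnchor a ∧ e.componentType a = κ} * κ.2 := by
  calc Nat.card {b // e.componentType b = κ}
      = Nat.card {x : e.Coord // x.1 = κ} :=
        Nat.card_congr ((Equiv.ofBijective _ fromCoord_bijective).subtypeEquiv
          fun x => by simp [componentType_fromCoord]).symm
    _ = _ := by rw [Nat.card_congr (Equiv.sigmaSubtype κ), Nat.card_prod, Nat.card_fin]

end Coord

theorem card_isAnchor_of_snd_eq_zero [LinearOrder α] [Fintype α] {κ : Bool × ℕ}
    (hκ : κ.2 = 0) :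
    Nat.card {a // e.IsAnchor a ∧ e.componentType a = κ} = 0 :=
  Nat.card_eq_zero.2 <| .inl
    ⟨fun a => (componentSize_pos a.1).ne' ((congrArg Prod.snd a.2.2).trans hκ)⟩

theorem card_isAnchor_eq_of_card_componentType_eq [LinearOrder α] [Fintype α] [LinearOrder β]
    [Fintype β] {e' : β ≃. β}
    (h : ∀ κ, Nat.card {a // e.componentType a = κ} = Nat.card {b // e'.componentType b = κ})
    (κ : Bool × ℕ) :
    Nat.card {a // e.IsAnchor a ∧ e.componentType a = κ} =
      Nat.card {b // e'.IsAnchor b ∧ e'.componentType b = κ} := by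
  rcases Nat.eq_zero_or_pos κ.2 with hκ | hκ
  · rw [card_isAnchor_of_snd_eq_zero hκ, card_isAnchor_of_snd_eq_zero hκ]
  · exact Nat.eq_of_mul_eq_mul_right hκ <| by
      rw [← card_componentType_eq, h, card_componentType_eq]

theorem exists_equiv_conj_iff [Fintype α] [Fintype β] {e' : β ≃. β} :
    (∃ w : α ≃ β, ∀ a, e' (w a) = (e a).map w) ↔
      ∀ κ, Nat.card {a // e.componentType a = κ} = Nat.card {b // e'.componentType b = κ} := by
  refine ⟨fun ⟨w, hw⟩ κ => Nat.card_congr (w.subtypeEquiv fun a => ?_), fun h => ?_⟩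
  · rw [componentType_conj hw]
  -- anchors of cycles are defined through an auxiliary linear order
  let : LinearOrder α := LinearOrder.lift' _ (Fintype.equivFin α).injective
  let : LinearOrder β := LinearOrder.lift' _ (Fintype.equivFin β).injective
  have E κ := (Finite.card_eq.1 (card_isAnchor_eq_of_card_componentType_eq h κ)).some
  let M : e.Coord ≃ e'.Coord :=
    Equiv.sigmaCongrRight fun κ => (E κ).prodCongr (Equiv.refl _)
  let Φ := Equiv.ofBijective _ (fromCoord_bijective (e := e))
  let Φ' := Equiv.ofBijective _ (fromCoord_bijective (e := e'))
  refine ⟨Φ.symm.trans (M.trans Φ'), fun a => ?_⟩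
  obtain ⟨x, rfl⟩ := Φ.surjective a
  have hΦ (y : e.Coord) : (Φ.symm.trans (M.trans Φ')) (Φ y) = e'.fromCoord (M y) := by
    simp [Φ, Φ']
  rw [hΦ, Equiv.ofBijective_apply, apply_fromCoord, apply_fromCoord, shift_sigmaCongrRight,
    Option.map_map, Option.map_map]
  exact congrArg (Option.map · (shift x)) (funext fun y => (hΦ y).symm)

end PEquiv

section PartialPerm

open Function

variable {n : ℕ} {I J : List (Fin n)}

theorem nextV_eq_some_iff (hI : I.Nodup) (hlen : I.length = J.length) {a b : Fin n} :
    nextV I J a = some b ↔ (a, b) ∈ I.zip J := by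
  have hfst : ((I.zip J).map Prod.fst).Nodup := by rwa [List.map_fst_zip hlen.le]
  simp only [nextV, Option.map_eq_some_iff]
  constructor
  · rintro ⟨⟨a', b'⟩, hp, rfl⟩
    obtain rfl : a' = a := by simpa using List.find?_some hp
    exact List.mem_of_find?_eq_some hp
  · intro h
    obtain ⟨p, hp⟩ := Option.isSome_iff_exists.1 <|
      (List.find?_isSome (p := fun p : Fin n × Fin n => decide (p.1 = a))).2
        ⟨(a, b), h, by simp⟩
    refine ⟨p, hp, ?_⟩
    rw [List.inj_on_of_nodup_map hfst (List.mem_of_find?_eq_some hp) h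
      (by simpa using List.find?_some hp)]

theorem mem_zip_swap {a b : Fin n} : (a, b) ∈ I.zip J ↔ (b, a) ∈ J.zip I := by
  rw [← List.zip_swap, List.mem_map]
  exact ⟨fun ⟨⟨_, _⟩, h, he⟩ => by cases he; exact h, fun h => ⟨_, h, rfl⟩⟩

def partialPerm (hI : I.Nodup) (hJ : J.Nodup) (hlen : I.length = J.length) : Fin n ≃. Fin n where
  toFun := nextV I J
  invFun := nextV J I
  inv a b := by
    rw [nextV_eq_some_iff hJ hlen.symm, nextV_eq_some_iff hI hlen, mem_zip_swap]

variable (hI : I.Nodup) (hJ : J.Nodup) (hlen : I.length = J.length)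

theorem onCycle_iff_isCyclic {v : Fin n} : onCycle I J v ↔ (partialPerm hI hJ hlen).IsCyclic v :=
  Iff.rfl

theorem onCycleLen_iff {v : Fin n} {m : ℕ} :
    onCycleLen I J v m ↔ (partialPerm hI hJ hlen).componentType v = (true, m) := by
  simp only [PEquiv.componentType, Prod.mk.injEq, decide_eq_true_iff]
  constructor
  · rintro ⟨hm, hper, hmin⟩
    have hc : (partialPerm hI hJ hlen).IsCyclic v := ⟨m, hm, hper⟩
    refine ⟨hc, ?_⟩
    rw [PEquiv.componentSize_of_isCyclic hc]
    exact le_antisymm (IsPeriodicPt.minimalPeriod_le hm hper) <| not_lt.1 fun hlt =>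
      hmin _ (minimalPeriod_pos_of_mem_periodicPts hc) hlt iterate_minimalPeriod
  · rintro ⟨hc, rfl⟩
    rw [PEquiv.componentSize_of_isCyclic hc]
    exact ⟨minimalPeriod_pos_of_mem_periodicPts hc, iterate_minimalPeriod,
      fun l hl hlt => not_isPeriodicPt_of_pos_of_lt_minimalPeriod (by omega) hlt⟩

theorem fwdCount_eq_forwardLength {v : Fin n} (hv : ¬ onCycle I J v) :
    fwdCount I J v = (partialPerm hI hJ hlen).forwardLength v := by
  replace hv := (onCycle_iff_isCyclic hI hJ hlen).not.1 hv
  have hle := PEquiv.forwardLength_le_card_succ hv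
  rw [Fintype.card_fin] at hle
  rw [fwdCount, ← Nat.card_fin ((partialPerm hI hJ hlen).forwardLength v)]
  refine Nat.card_congr ((Equiv.subtypeEquivRight fun m => ?_).trans Fin.equivSubtype.symm)
  change m ≤ n ∧ ((partialPerm hI hJ hlen).onOption^[m] (some v)).isSome ↔ _
  rw [Option.isSome_iff_ne_none, Ne, PEquiv.iterate_eq_none_iff_forwardLength_le hv]
  omega

theorem pathSize_eq_componentSize {v : Fin n} (hv : ¬ onCycle I J v) :
    pathSize I J v = (partialPerm hI hJ hlen).componentSize v := by
  replace hv := (onCycle_iff_isCyclic hI hJ hlen).not.1 hv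
  rw [pathSize, fwdCount_eq_forwardLength hI hJ hlen hv, fwdCount_eq_forwardLength hJ hI hlen.symm
    (PEquiv.isCyclic_symm_iff.not.2 hv), PEquiv.componentSize_of_not_isCyclic hv]
  rfl

theorem cycVerts_eq_card (m : ℕ) :
    cycVerts I J m = Nat.card {v // (partialPerm hI hJ hlen).componentType v = (true, m)} :=
  Nat.card_congr (Equiv.subtypeEquivRight fun _ => onCycleLen_iff hI hJ hlen)

theorem pathVerts_eq_card (m : ℕ) :
    pathVerts I J m = Nat.card {v // (partialPerm hI hJ hlen).componentType v = (false, m)} := by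
  refine Nat.card_congr (Equiv.subtypeEquivRight fun v => ?_)
  simp only [PEquiv.componentType, Prod.mk.injEq, decide_eq_false_iff_not]
  exact and_congr_right fun hv => by rw [pathSize_eq_componentSize hI hJ hlen hv]

variable {I' J' : List (Fin n)} (hI' : I'.Nodup) (hJ' : J'.Nodup) (hlen' : I'.length = J'.length)

theorem sameCyclePathType_iff_card_componentType_eq :
    SameCyclePathType I J I' J' ↔ ∀ κ,
      Nat.card {v // (partialPerm hI hJ hlen).componentType v = κ} =
        Nat.card {v // (partialPerm hI' hJ' hlen').componentType v = κ} := by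
  simp only [SameCyclePathType, Prod.forall, Bool.forall_bool, cycVerts_eq_card hI hJ hlen,
    cycVerts_eq_card hI' hJ' hlen', pathVerts_eq_card hI hJ hlen, pathVerts_eq_card hI' hJ' hlen']
  exact and_comm

theorem coe_zip_map_eq_iff (w : Equiv.Perm (Fin n)) :
    (((I.map w).zip (J.map w) : List (Fin n × Fin n)) : Multiset (Fin n × Fin n)) =
        ((I'.zip J' : List (Fin n × Fin n)) : Multiset (Fin n × Fin n)) ↔
      ∀ v, partialPerm hI' hJ' hlen' (w v) = (partialPerm hI hJ hlen v).map w := by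
  have hnodup {K L : List (Fin n)} (hK : K.Nodup) (hKL : K.length = L.length) :
      (K.zip L).Nodup :=
    List.Nodup.of_map Prod.fst (by rwa [List.map_fst_zip hKL.le])
  rw [Multiset.Nodup.ext (Multiset.coe_nodup.2 (hnodup (hI.map w.injective) (by simp [hlen])))
    (Multiset.coe_nodup.2 (hnodup hI' hlen'))]
  simp only [Multiset.mem_coe, Prod.forall]
  refine w.forall_congr_right.symm.trans <| forall_congr' fun v => Iff.trans ?_ Option.ext_iff.symm
  refine w.forall_congr_right.symm.trans <|
    Iff.trans (forall_congr' fun u => ?_) w.forall_congr_right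
  have hmem : (w v, w u) ∈ (I.map w).zip (J.map w) ↔ (v, u) ∈ I.zip J := by
    rw [List.zip_map]
    exact List.mem_map_of_injective (a := (v, u)) (w.injective.prodMap w.injective)
  have hmap : (partialPerm hI hJ hlen v).map w = some (w u) ↔ partialPerm hI hJ hlen v = some u :=
    (Option.map_injective w.injective).eq_iff (b := some u)
  rw [hmem, hmap, ← nextV_eq_some_iff hI hlen, ← nextV_eq_some_iff hI' hlen']
  exact Iff.comm

end PartialPerm

/-- Two partial permutations of `[n]` have the same cycle-path type if and only if some
`w ∈ S_n` carries one to the other, i.e. `(w(I), w(J)) = (I', J')` as partial permutations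
(equality of the edge data up to simultaneous reordering). -/
theorem sameCyclePathType_iff_exists_perm {n : ℕ} (I J I' J' : List (Fin n))
    (hI : I.Nodup) (hJ : J.Nodup) (hI' : I'.Nodup) (hJ' : J'.Nodup)
    (hlen : I.length = J.length) (hlen' : I'.length = J'.length) :
    SameCyclePathType I J I' J' ↔
      ∃ w : Equiv.Perm (Fin n),
        (((I.map ⇑w).zip (J.map ⇑w) : List (Fin n × Fin n)) : Multiset (Fin n × Fin n)) =
          ((I'.zip J' : List (Fin n × Fin n)) : Multiset (Fin n × Fin n)) := by
  rw [sameCyclePathType_iff_card_componentType_eq hI hJ hlen hI' hJ' hlen',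
    ← PEquiv.exists_equiv_conj_iff]
  exact exists_congr fun w => (coe_zip_map_eq_iff hI hJ hlen hI' hJ' hlen' w).symm
end

section
/- For positive integers k and r, the path power sum of the rectangular partition (k^r) satisfies p⃗_{(k^r)} = r! · h_r[p_k], where h_r[p_k] denotes the plethysm of the complete homogeneous symmetric function h_r with the power sum p_k. Equivalently, p⃗_{(k^r)} = ∑_{λ ⊢ r} |K_λ| · p_{k·λ}, where |K_λ| = r!/z_λ is the size of the conjugacy class of cycle type λ in S_r and k·λ = (kλ_1, kλ_2, …). -/
open Finset

/-- The cycles (orbits) of a permutation of `Fin r` (fixed points count as 1-cycles). -/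
def cyclesOf {r : ℕ} (w : Equiv.Perm (Fin r)) : Finset (Finset (Fin r)) :=
  Finset.image (fun i => Finset.univ.filter (fun j => w.SameCycle i j)) Finset.univ

/-- The cycle type of a permutation, as the multiset of its orbit sizes
(including fixed points as parts equal to 1). -/
def typeOf {r : ℕ} (w : Equiv.Perm (Fin r)) : Multiset ℕ :=
  (cyclesOf w).val.map Finset.card

namespace PathPowAux

variable {r : ℕ}

/-- The cycle (orbit) of a point. -/
def cl (w : Equiv.Perm (Fin r)) (i : Fin r) : Finset (Fin r) :=
  Finset.univ.filter (fun j => w.SameCycle i j)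

lemma cyclesOf_eq_image (w : Equiv.Perm (Fin r)) :
    cyclesOf w = Finset.image (cl w) Finset.univ := rfl

lemma mem_cl {w : Equiv.Perm (Fin r)} {i j : Fin r} : j ∈ cl w i ↔ w.SameCycle i j := by
  simp [cl]

lemma self_mem_cl (w : Equiv.Perm (Fin r)) (i : Fin r) : i ∈ cl w i :=
  mem_cl.2 (Equiv.Perm.SameCycle.refl w i)

lemma cl_eq_cl_of_sameCycle {w : Equiv.Perm (Fin r)} {i j : Fin r} (h : w.SameCycle i j) :
    cl w i = cl w j := by
  ext x
  simp only [mem_cl]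
  exact ⟨fun hx => h.symm.trans hx, fun hx => h.trans hx⟩

lemma fiber_cl (w : Equiv.Perm (Fin r)) (i₀ : Fin r) :
    Finset.univ.filter (fun i => cl w i = cl w i₀) = cl w i₀ := by
  ext i
  simp only [Finset.mem_filter, Finset.mem_univ, true_and]
  constructor
  · intro h; rw [← h]; exact self_mem_cl w i
  · intro h; exact (cl_eq_cl_of_sameCycle (mem_cl.1 h)).symm

/-- Summing a function of the cycle of each point, grouped by cycles. -/
lemma sum_cl {M : Type*} [AddCommMonoid M] (w : Equiv.Perm (Fin r))
    (g : Finset (Fin r) → M) :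
    ∑ i : Fin r, g (cl w i) = ∑ C ∈ cyclesOf w, C.card • g C := by
  rw [cyclesOf_eq_image, ← Finset.sum_fiberwise_of_maps_to (g := cl w)
      (t := Finset.image (cl w) Finset.univ)
      (fun i _ => Finset.mem_image_of_mem _ (Finset.mem_univ i))]
  refine Finset.sum_congr rfl (fun C hC => ?_)
  obtain ⟨i₀, -, rfl⟩ := Finset.mem_image.1 hC
  rw [fiber_cl]
  rw [Finset.sum_congr rfl (fun i hi => congrArg g (cl_eq_cl_of_sameCycle (mem_cl.1 hi)).symm)]
  rw [Finset.sum_const]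

lemma sum_card_cycles (w : Equiv.Perm (Fin r)) : ∑ C ∈ cyclesOf w, C.card = r := by
  have h := sum_cl w (fun _ => (1 : ℕ))
  simpa using h.symm

lemma typeOf_sum (w : Equiv.Perm (Fin r)) : (typeOf w).sum = r := by
  have h : (typeOf w).sum = ∑ C ∈ cyclesOf w, C.card := rfl
  rw [h, sum_card_cycles]

lemma typeOf_pos (w : Equiv.Perm (Fin r)) {c : ℕ} (hc : c ∈ typeOf w) : 0 < c := by
  obtain ⟨C, hC, rfl⟩ := Multiset.mem_map.1 hc
  have hC' : C ∈ cyclesOf w := hC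
  obtain ⟨i, -, rfl⟩ := Finset.mem_image.1 hC'
  exact Finset.card_pos.2 ⟨i, self_mem_cl w i⟩

/-- The partition associated to a permutation. -/
def toPart (w : Equiv.Perm (Fin r)) : Nat.Partition r :=
  ⟨typeOf w, fun hi => typeOf_pos w hi, typeOf_sum w⟩

end PathPowAux

namespace PathPowAux

open Equiv Equiv.Perm

variable {n : ℕ}

set_option linter.unusedSectionVars false

lemma pow_mem_of_closed {α : Type*} {σ : Equiv.Perm α} {K : Finset α}
    (hK : ∀ z ∈ K, σ z ∈ K) {a : α} (ha : a ∈ K) : ∀ i : ℕ, (σ ^ i) a ∈ K := by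
  intro i
  induction i with
  | zero => simpa using ha
  | succ i ih =>
    rw [pow_succ', Equiv.Perm.mul_apply]
    exact hK _ ih

lemma mem_of_sameCycle_closed {α : Type*} [DecidableEq α] [Fintype α] {σ : Equiv.Perm α}
    {K : Finset α} (hK : ∀ z ∈ K, σ z ∈ K) {a b : α} (ha : a ∈ K) (h : σ.SameCycle a b) :
    b ∈ K := by
  obtain ⟨i, -, -, hi⟩ := h.exists_pow_eq σ
  exact hi ▸ pow_mem_of_closed hK ha i

lemma df_zero_apply_zero (e : Equiv.Perm (Fin n)) :
    (decomposeFin.symm ((0 : Fin (n+1)), e)) 0 = 0 := by simp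

lemma df_zero_apply_succ (e : Equiv.Perm (Fin n)) (x : Fin n) :
    (decomposeFin.symm ((0 : Fin (n+1)), e)) x.succ = (e x).succ := by
  simp

lemma df_succ_apply_succ (e : Equiv.Perm (Fin n)) (q x : Fin n) :
    (decomposeFin.symm (q.succ, e)) x.succ = if e x = q then 0 else (e x).succ := by
  rw [Equiv.Perm.decomposeFin_symm_apply_succ]
  by_cases h : e x = q
  · rw [if_pos h, h, Equiv.swap_apply_right]
  · rw [if_neg h, Equiv.swap_apply_of_ne_of_ne (Fin.succ_ne_zero _)
      (by simpa [Fin.succ_inj] using h)]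

lemma sc_step_zero (e : Equiv.Perm (Fin n)) (x : Fin n) :
    (decomposeFin.symm ((0 : Fin (n+1)), e)).SameCycle x.succ (e x).succ :=
  ⟨1, by rw [zpow_one, df_zero_apply_succ]⟩

lemma sc_zero_qsucc (e : Equiv.Perm (Fin n)) (q : Fin n) :
    (decomposeFin.symm (q.succ, e)).SameCycle 0 q.succ :=
  ⟨1, by rw [zpow_one]; simp⟩

lemma sc_step_succ (e : Equiv.Perm (Fin n)) (q x : Fin n) :
    (decomposeFin.symm (q.succ, e)).SameCycle x.succ (e x).succ := by
  by_cases h : e x = q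
  · have h1 : (decomposeFin.symm (q.succ, e)).SameCycle x.succ 0 :=
      ⟨1, by rw [zpow_one, df_succ_apply_succ, if_pos h]⟩
    exact h1.trans (by rw [h]; exact sc_zero_qsucc e q)
  · exact ⟨1, by rw [zpow_one, df_succ_apply_succ, if_neg h]⟩

lemma sc_pow_zero (e : Equiv.Perm (Fin n)) (x : Fin n) (i : ℕ) :
    (decomposeFin.symm ((0 : Fin (n+1)), e)).SameCycle x.succ ((e ^ i) x).succ := by
  induction i with
  | zero => simp [Equiv.Perm.SameCycle.refl]
  | succ i ih =>
    have h : (e ^ (i+1)) x = e ((e ^ i) x) := by rw [pow_succ', Equiv.Perm.mul_apply]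
    rw [h]
    exact ih.trans (sc_step_zero e _)

lemma sc_pow_succ (e : Equiv.Perm (Fin n)) (q x : Fin n) (i : ℕ) :
    (decomposeFin.symm (q.succ, e)).SameCycle x.succ ((e ^ i) x).succ := by
  induction i with
  | zero => simp [Equiv.Perm.SameCycle.refl]
  | succ i ih =>
    have h : (e ^ (i+1)) x = e ((e ^ i) x) := by rw [pow_succ', Equiv.Perm.mul_apply]
    rw [h]
    exact ih.trans (sc_step_succ e q _)

lemma sc_lift_zero (e : Equiv.Perm (Fin n)) {x y : Fin n} (h : e.SameCycle x y) :
    (decomposeFin.symm ((0 : Fin (n+1)), e)).SameCycle x.succ y.succ := by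
  obtain ⟨i, -, -, hi⟩ := h.exists_pow_eq e
  exact hi ▸ sc_pow_zero e x i

lemma sc_lift_succ (e : Equiv.Perm (Fin n)) (q : Fin n) {x y : Fin n} (h : e.SameCycle x y) :
    (decomposeFin.symm (q.succ, e)).SameCycle x.succ y.succ := by
  obtain ⟨i, -, -, hi⟩ := h.exists_pow_eq e
  exact hi ▸ sc_pow_succ e q x i

lemma cl_df_zero_zero (e : Equiv.Perm (Fin n)) :
    cl (decomposeFin.symm ((0 : Fin (n+1)), e)) 0 = {0} := by
  apply Finset.Subset.antisymm
  · intro b hb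
    exact mem_of_sameCycle_closed (K := {0})
      (fun z hz => by rw [Finset.mem_singleton] at hz; rw [hz, df_zero_apply_zero]; simp)
      (Finset.mem_singleton_self 0) (mem_cl.1 hb)
  · intro b hb
    rw [Finset.mem_singleton] at hb
    rw [hb]
    exact self_mem_cl _ _

lemma cl_df_zero_succ (e : Equiv.Perm (Fin n)) (x : Fin n) :
    cl (decomposeFin.symm ((0 : Fin (n+1)), e)) x.succ = (cl e x).map (Fin.succEmb n) := by
  apply Finset.Subset.antisymm
  · intro b hb
    refine mem_of_sameCycle_closed (K := (cl e x).map (Fin.succEmb n)) ?_ ?_ (mem_cl.1 hb)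
    · intro z hz
      obtain ⟨y, hy, rfl⟩ := Finset.mem_map.1 hz
      have : (Fin.succEmb n) y = y.succ := rfl
      rw [this, df_zero_apply_succ]
      exact Finset.mem_map_of_mem _ (mem_cl.2 ((mem_cl.1 hy).apply_right))
    · exact Finset.mem_map_of_mem _ (self_mem_cl e x)
  · intro b hb
    obtain ⟨y, hy, rfl⟩ := Finset.mem_map.1 hb
    exact mem_cl.2 (sc_lift_zero e (mem_cl.1 hy))

lemma cl_df_succ_zero (e : Equiv.Perm (Fin n)) (q : Fin n) :
    cl (decomposeFin.symm (q.succ, e)) 0 = insert 0 ((cl e q).map (Fin.succEmb n)) := by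
  apply Finset.Subset.antisymm
  · intro b hb
    refine mem_of_sameCycle_closed (K := insert 0 ((cl e q).map (Fin.succEmb n))) ?_ ?_
      (mem_cl.1 hb)
    · intro z hz
      rcases Finset.mem_insert.1 hz with hz0 | hzs
      · rw [hz0]
        have : (decomposeFin.symm (q.succ, e)) 0 = q.succ := by simp
        rw [this]
        exact Finset.mem_insert_of_mem (Finset.mem_map_of_mem _ (self_mem_cl e q))
      · obtain ⟨y, hy, rfl⟩ := Finset.mem_map.1 hzs
        have hys : (Fin.succEmb n) y = y.succ := rfl
        rw [hys, df_succ_apply_succ]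
        by_cases h : e y = q
        · rw [if_pos h]; exact Finset.mem_insert_self _ _
        · rw [if_neg h]
          exact Finset.mem_insert_of_mem
            (Finset.mem_map_of_mem _ (mem_cl.2 ((mem_cl.1 hy).apply_right)))
    · exact Finset.mem_insert_self _ _
  · intro b hb
    rcases Finset.mem_insert.1 hb with hb0 | hbs
    · rw [hb0]; exact self_mem_cl _ _
    · obtain ⟨y, hy, rfl⟩ := Finset.mem_map.1 hbs
      exact mem_cl.2 ((sc_zero_qsucc e q).trans (sc_lift_succ e q (mem_cl.1 hy)))

lemma cl_df_succ_succ (e : Equiv.Perm (Fin n)) (q x : Fin n) :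
    cl (decomposeFin.symm (q.succ, e)) x.succ =
      if q ∈ cl e x then insert 0 ((cl e x).map (Fin.succEmb n))
      else (cl e x).map (Fin.succEmb n) := by
  by_cases hqx : q ∈ cl e x
  · rw [if_pos hqx]
    have hxq : e.SameCycle x q := mem_cl.1 hqx
    have h0x : (decomposeFin.symm (q.succ, e)).SameCycle 0 x.succ :=
      (sc_zero_qsucc e q).trans (sc_lift_succ e q hxq.symm)
    rw [← cl_eq_cl_of_sameCycle h0x, cl_df_succ_zero,
      cl_eq_cl_of_sameCycle hxq]
  · rw [if_neg hqx]
    apply Finset.Subset.antisymm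
    · intro b hb
      refine mem_of_sameCycle_closed (K := (cl e x).map (Fin.succEmb n)) ?_ ?_ (mem_cl.1 hb)
      · intro z hz
        obtain ⟨y, hy, rfl⟩ := Finset.mem_map.1 hz
        have hys : (Fin.succEmb n) y = y.succ := rfl
        have hey : e y ≠ q := by
          intro h
          exact hqx (h ▸ mem_cl.2 ((mem_cl.1 hy).apply_right))
        rw [hys, df_succ_apply_succ, if_neg hey]
        exact Finset.mem_map_of_mem _ (mem_cl.2 ((mem_cl.1 hy).apply_right))
      · exact Finset.mem_map_of_mem _ (self_mem_cl e x)
    · intro b hb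
      obtain ⟨y, hy, rfl⟩ := Finset.mem_map.1 hb
      exact mem_cl.2 (sc_lift_succ e q (mem_cl.1 hy))

end PathPowAux

namespace PathPowAux

open Equiv Equiv.Perm

variable {n : ℕ}

/-- Insert `0` into a cycle `C` if `q ∈ C`, otherwise just shift. -/
def bumpSet (q : Fin n) (C : Finset (Fin n)) : Finset (Fin (n+1)) :=
  if q ∈ C then insert 0 (C.map (Fin.succEmb n)) else C.map (Fin.succEmb n)

lemma zero_notMem_map_succ (C : Finset (Fin n)) :
    (0 : Fin (n+1)) ∉ C.map (Fin.succEmb n) := by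
  intro h
  obtain ⟨y, -, hy⟩ := Finset.mem_map.1 h
  exact Fin.succ_ne_zero y hy

lemma bumpSet_erase_zero (q : Fin n) (C : Finset (Fin n)) :
    (bumpSet q C).erase 0 = C.map (Fin.succEmb n) := by
  unfold bumpSet
  by_cases h : q ∈ C
  · rw [if_pos h, Finset.erase_insert (zero_notMem_map_succ C)]
  · rw [if_neg h, Finset.erase_eq_of_notMem (zero_notMem_map_succ C)]

lemma bumpSet_injective (q : Fin n) : Function.Injective (bumpSet q) := by
  intro C C' h
  have := congrArg (fun s => Finset.erase s 0) h
  simp only [bumpSet_erase_zero] at this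
  exact Finset.map_injective _ this

lemma card_bumpSet (q : Fin n) (C : Finset (Fin n)) :
    (bumpSet q C).card = C.card + if q ∈ C then 1 else 0 := by
  unfold bumpSet
  by_cases h : q ∈ C
  · rw [if_pos h, if_pos h, Finset.card_insert_of_notMem (zero_notMem_map_succ C),
      Finset.card_map]
  · rw [if_neg h, if_neg h, Finset.card_map, Nat.add_zero]

lemma cyclesOf_df_succ (e : Equiv.Perm (Fin n)) (q : Fin n) :
    cyclesOf (decomposeFin.symm (q.succ, e)) = (cyclesOf e).image (bumpSet q) := by
  rw [cyclesOf_eq_image (decomposeFin.symm (q.succ, e)), Fin.univ_succ, Finset.cons_eq_insert, Finset.image_insert]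
  have h1 : cl (decomposeFin.symm (q.succ, e)) 0 = bumpSet q (cl e q) := by
    rw [cl_df_succ_zero, bumpSet, if_pos (self_mem_cl e q)]
  have h2 : Finset.image (cl (decomposeFin.symm (q.succ, e)))
      (Finset.univ.map ⟨Fin.succ, Fin.succ_injective n⟩) =
      (cyclesOf e).image (bumpSet q) := by
    rw [Finset.map_eq_image, Finset.image_image, cyclesOf_eq_image e, Finset.image_image]
    refine Finset.image_congr ?_
    intro x _
    show cl (decomposeFin.symm (q.succ, e)) x.succ = bumpSet q (cl e x)
    rw [cl_df_succ_succ, bumpSet]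
  rw [h1, h2, Finset.insert_eq_self.2]
  exact Finset.mem_image_of_mem _ (Finset.mem_image_of_mem _ (Finset.mem_univ q))

lemma cl_eq_of_mem_cyclesOf {r : ℕ} {e : Equiv.Perm (Fin r)} {C : Finset (Fin r)} {q : Fin r}
    (hC : C ∈ cyclesOf e) (hq : q ∈ C) : C = cl e q := by
  rw [cyclesOf_eq_image] at hC
  obtain ⟨x, -, rfl⟩ := Finset.mem_image.1 hC
  exact cl_eq_cl_of_sameCycle (mem_cl.1 hq)

lemma typeOf_df_succ (e : Equiv.Perm (Fin n)) (q : Fin n) :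
    typeOf (decomposeFin.symm (q.succ, e)) =
      ((cl e q).card + 1) ::ₘ ((typeOf e).erase (cl e q).card) := by
  have h1 : typeOf (decomposeFin.symm (q.succ, e)) =
      (cyclesOf e).val.map (fun C => (bumpSet q C).card) := by
    rw [typeOf, cyclesOf_df_succ,
      Finset.image_val_of_injOn ((bumpSet_injective q).injOn), Multiset.map_map]
    rfl
  have hmem : cl e q ∈ (cyclesOf e).val :=
    Finset.mem_image_of_mem _ (Finset.mem_univ q)
  set t := (cyclesOf e).val.erase (cl e q) with ht
  have hs : (cyclesOf e).val = cl e q ::ₘ t := (Multiset.cons_erase hmem).symm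
  have hnodup := (cyclesOf e).nodup
  have htmap : t.map (fun C => (bumpSet q C).card) = t.map Finset.card := by
    refine Multiset.map_congr rfl ?_
    intro C hC
    have hC' := (Multiset.Nodup.mem_erase_iff hnodup).1 hC
    have hqC : q ∉ C := by
      intro hq
      exact hC'.1 (cl_eq_of_mem_cyclesOf hC'.2 hq)
    rw [card_bumpSet, if_neg hqC, Nat.add_zero]
  rw [h1, hs, Multiset.map_cons, card_bumpSet, if_pos (self_mem_cl e q), htmap]
  have hrhs : (typeOf e).erase (cl e q).card = t.map Finset.card := by
    rw [typeOf, hs, Multiset.map_cons, Multiset.erase_cons_head]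
  rw [hrhs]

lemma cyclesOf_df_zero (e : Equiv.Perm (Fin n)) :
    cyclesOf (decomposeFin.symm ((0 : Fin (n+1)), e)) =
      insert {0} ((cyclesOf e).image (fun C => C.map (Fin.succEmb n))) := by
  rw [cyclesOf_eq_image (decomposeFin.symm ((0 : Fin (n+1)), e)), Fin.univ_succ,
    Finset.cons_eq_insert, Finset.image_insert, cl_df_zero_zero]
  congr 1
  rw [Finset.map_eq_image, Finset.image_image, cyclesOf_eq_image e, Finset.image_image]
  refine Finset.image_congr ?_
  intro x _
  show cl (decomposeFin.symm ((0 : Fin (n+1)), e)) x.succ = (cl e x).map (Fin.succEmb n)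
  rw [cl_df_zero_succ]

lemma typeOf_df_zero (e : Equiv.Perm (Fin n)) :
    typeOf (decomposeFin.symm ((0 : Fin (n+1)), e)) = 1 ::ₘ typeOf e := by
  rw [typeOf, cyclesOf_df_zero, Finset.insert_val_of_notMem, Multiset.map_cons]
  · have h : Finset.card ({0} : Finset (Fin (n+1))) = 1 := Finset.card_singleton _
    rw [h]
    congr 1
    rw [Finset.image_val_of_injOn ((Finset.map_injective (Fin.succEmb n)).injOn),
      Multiset.map_map]
    rw [typeOf]
    refine Multiset.map_congr rfl ?_
    intro C _
    exact Finset.card_map _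
  · intro h
    obtain ⟨C, -, hC⟩ := Finset.mem_image.1 h
    have : (0 : Fin (n+1)) ∈ C.map (Fin.succEmb n) := by rw [hC]; exact Finset.mem_singleton_self _
    exact zero_notMem_map_succ C this

end PathPowAux

/-- `z` of a multiset. -/
def zM (m : Multiset ℕ) : ℕ := m.prod * ∏ i ∈ m.toFinset, (m.count i).factorial

namespace PathPowAux

lemma prod_fact_split (m : Multiset ℕ) (a : ℕ) :
    ∏ i ∈ m.toFinset, (m.count i).factorial =
      (m.count a).factorial * ∏ i ∈ m.toFinset.erase a, (m.count i).factorial := by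
  by_cases h : a ∈ m.toFinset
  · exact (Finset.mul_prod_erase _ _ h).symm
  · rw [Finset.erase_eq_of_notMem h, Multiset.count_eq_zero.2 (by simpa using h)]
    simp

lemma zM_cons (a : ℕ) (m : Multiset ℕ) : zM (a ::ₘ m) = a * (m.count a + 1) * zM m := by
  have hmem : a ∈ (a ::ₘ m).toFinset := by simp
  have h1 : ∏ i ∈ (a ::ₘ m).toFinset, ((a ::ₘ m).count i).factorial =
      ((a ::ₘ m).count a).factorial *
        ∏ i ∈ (a ::ₘ m).toFinset.erase a, ((a ::ₘ m).count i).factorial :=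
    (Finset.mul_prod_erase _ _ hmem).symm
  have h2 : (a ::ₘ m).toFinset.erase a = m.toFinset.erase a := by
    rw [Multiset.toFinset_cons, Finset.erase_insert_eq_erase]
  have h3 : ∏ i ∈ m.toFinset.erase a, ((a ::ₘ m).count i).factorial =
      ∏ i ∈ m.toFinset.erase a, (m.count i).factorial := by
    refine Finset.prod_congr rfl (fun i hi => ?_)
    rw [Multiset.count_cons_of_ne (Finset.ne_of_mem_erase hi) m]
  rw [zM, h1, h2, h3, Multiset.prod_cons, Multiset.count_cons_self, Nat.factorial_succ, zM,
    prod_fact_split m a]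
  ring

end PathPowAux

namespace PathPowAux

/-- The number of permutations of cycle type `Q`. -/
def Ncard (r : ℕ) (Q : Nat.Partition r) : ℕ :=
  (Finset.univ.filter (fun w : Equiv.Perm (Fin r) => typeOf w = Q.parts)).card

lemma zM_pos {m : Multiset ℕ} (hm : ∀ i ∈ m, 0 < i) : 0 < zM m :=
  Nat.mul_pos (Multiset.prod_pos hm) (Finset.prod_pos (fun _ _ => Nat.factorial_pos _))

variable {n : ℕ}

/-- Remove a part `i ≥ 2` from a partition of `n+1` and replace it by `i - 1`. -/
def shrinkAt (Q' : Nat.Partition (n+1)) (i : ℕ) (h2 : 2 ≤ i) (hi : i ∈ Q'.parts) :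
    Nat.Partition n where
  parts := (i - 1) ::ₘ Q'.parts.erase i
  parts_pos := by
    intro x hx
    rcases Multiset.mem_cons.1 hx with rfl | hx
    · omega
    · exact Q'.parts_pos (Multiset.mem_of_mem_erase hx)
  parts_sum := by
    have h := Q'.parts_sum
    have hc : i ::ₘ Q'.parts.erase i = Q'.parts := Multiset.cons_erase hi
    have hsum : i + (Q'.parts.erase i).sum = n + 1 := by
      rw [← Multiset.sum_cons, hc, h]
    rw [Multiset.sum_cons]
    omega

/-- Remove a part equal to `1` from a partition of `n+1`. -/
def erasePartOne (Q' : Nat.Partition (n+1)) (h1 : (1:ℕ) ∈ Q'.parts) : Nat.Partition n where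
  parts := Q'.parts.erase 1
  parts_pos := fun hx => Q'.parts_pos (Multiset.mem_of_mem_erase hx)
  parts_sum := by
    have h := Q'.parts_sum
    have hc : (1:ℕ) ::ₘ Q'.parts.erase 1 = Q'.parts := Multiset.cons_erase h1
    have hsum : 1 + (Q'.parts.erase 1).sum = n + 1 := by
      rw [← Multiset.sum_cons, hc, h]
    omega

lemma sum_HH1 (Q' : Nat.Partition (n+1)) :
    (∑ T : Nat.Partition n, if 1 ::ₘ T.parts = Q'.parts then Q'.parts.count 1 else 0)
      = Q'.parts.count 1 := by
  by_cases h1 : (1 : ℕ) ∈ Q'.parts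
  · set T₀ : Nat.Partition n := erasePartOne Q' h1 with hT₀
    have hcong : ∀ T : Nat.Partition n,
        (if 1 ::ₘ T.parts = Q'.parts then Q'.parts.count 1 else 0) =
        (if T = T₀ then Q'.parts.count 1 else 0) := by
      intro T
      congr 1
      rw [eq_iff_iff]
      constructor
      · intro h
        refine Nat.Partition.ext ?_
        have : (1:ℕ) ::ₘ T.parts = 1 ::ₘ Q'.parts.erase 1 := by
          rw [h, Multiset.cons_erase h1]
        exact (Multiset.cons_inj_right 1).1 this
      · rintro rfl
        exact Multiset.cons_erase h1
    rw [Finset.sum_congr rfl (fun T _ => hcong T), Finset.sum_ite_eq' Finset.univ T₀,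
      if_pos (Finset.mem_univ _)]
  · rw [Finset.sum_eq_zero, Multiset.count_eq_zero.2 h1]
    intro T _
    rw [if_neg]
    intro h
    exact h1 (h ▸ Multiset.mem_cons_self 1 T.parts)

end PathPowAux

namespace PathPowAux

variable {n : ℕ}

lemma sum_HH2 (Q' : Nat.Partition (n+1)) :
    (∑ T : Nat.Partition n, ∑ c ∈ T.parts.toFinset,
      if (c+1) ::ₘ T.parts.erase c = Q'.parts then (c+1) * Q'.parts.count (c+1) else 0)
    = ∑ i ∈ Q'.parts.toFinset.filter (fun i => 2 ≤ i), i * Q'.parts.count i := by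
  have h1 : ∀ T : Nat.Partition n, (∑ c ∈ T.parts.toFinset,
      if (c+1) ::ₘ T.parts.erase c = Q'.parts then (c+1) * Q'.parts.count (c+1) else 0) =
      ∑ c ∈ T.parts.toFinset.filter (fun c => (c+1) ::ₘ T.parts.erase c = Q'.parts),
        (c+1) * Q'.parts.count (c+1) :=
    fun T => (Finset.sum_filter _ _).symm
  rw [Finset.sum_congr rfl (fun T _ => h1 T), Finset.sum_sigma']
  refine Finset.sum_bij' (i := fun a _ => a.2 + 1)
    (j := fun b hb => ⟨shrinkAt Q' b ((Finset.mem_filter.1 hb).2)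
      (Multiset.mem_toFinset.1 (Finset.mem_filter.1 hb).1), b - 1⟩) ?_ ?_ ?_ ?_ ?_
  · rintro ⟨T, c⟩ ha
    have ha' := (Finset.mem_sigma.1 ha).2
    have hc := Finset.mem_filter.1 ha'
    have hcT : c ∈ T.parts := Multiset.mem_toFinset.1 hc.1
    have hcond := hc.2
    have hmem : c + 1 ∈ Q'.parts := hcond ▸ Multiset.mem_cons_self _ _
    have hpos : 0 < c := T.parts_pos hcT
    dsimp only
    exact Finset.mem_filter.2 ⟨Multiset.mem_toFinset.2 hmem, by omega⟩
  · intro b hb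
    have h2b := (Finset.mem_filter.1 hb).2
    have hbm := Multiset.mem_toFinset.1 (Finset.mem_filter.1 hb).1
    refine Finset.mem_sigma.2 ⟨Finset.mem_univ _, Finset.mem_filter.2 ⟨?_, ?_⟩⟩
    · exact Multiset.mem_toFinset.2 (Multiset.mem_cons_self _ _)
    · show (b - 1 + 1) ::ₘ ((b-1) ::ₘ Q'.parts.erase b).erase (b-1) = Q'.parts
      rw [show b - 1 + 1 = b by omega, Multiset.erase_cons_head, Multiset.cons_erase hbm]
  · rintro ⟨T, c⟩ ha
    have ha' := (Finset.mem_sigma.1 ha).2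
    have hc := Finset.mem_filter.1 ha'
    have hcT : c ∈ T.parts := Multiset.mem_toFinset.1 hc.1
    have hcond := hc.2
    dsimp only at hcond ⊢
    have hT : shrinkAt Q' (c+1) (Nat.succ_le_succ (T.parts_pos hcT))
        (hcond ▸ Multiset.mem_cons_self _ _) = T := by
      refine Nat.Partition.ext ?_
      show (c + 1 - 1) ::ₘ Q'.parts.erase (c+1) = T.parts
      have herase : Q'.parts.erase (c+1) = T.parts.erase c := by
        rw [← hcond, Multiset.erase_cons_head]
      rw [herase, show c + 1 - 1 = c from rfl, Multiset.cons_erase hcT]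
    exact Sigma.ext hT (heq_of_eq rfl)
  · intro b hb
    have h2b := (Finset.mem_filter.1 hb).2
    dsimp only
    omega
  · rintro ⟨T, c⟩ _
    rfl

lemma sum_count_mul (m : Multiset ℕ) : ∑ i ∈ m.toFinset, m.count i * i = m.sum := by
  have h := Finset.sum_multiset_map_count m (id : ℕ → ℕ)
  rw [Multiset.map_id] at h
  rw [h]
  exact Finset.sum_congr rfl (fun i _ => by simp)

lemma sum_low (m : Multiset ℕ) (hpos : ∀ i ∈ m, 0 < i) :
    ∑ i ∈ m.toFinset.filter (fun i => ¬ 2 ≤ i), m.count i * i = m.count 1 := by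
  by_cases h1 : (1:ℕ) ∈ m
  · have : m.toFinset.filter (fun i => ¬ 2 ≤ i) = {1} := by
      ext i
      simp only [Finset.mem_filter, Multiset.mem_toFinset, Finset.mem_singleton]
      constructor
      · rintro ⟨him, hle⟩
        have := hpos i him
        omega
      · rintro rfl
        exact ⟨h1, by omega⟩
    rw [this, Finset.sum_singleton, Nat.mul_one]
  · have : m.toFinset.filter (fun i => ¬ 2 ≤ i) = ∅ := by
      ext i
      simp only [Finset.mem_filter, Multiset.mem_toFinset, Finset.notMem_empty, iff_false,
        not_and]
      intro him hle
      have hp := hpos i him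
      have hi1 : i = 1 := by omega
      exact h1 (hi1 ▸ him)
    rw [this, Finset.sum_empty, Multiset.count_eq_zero.2 h1]

lemma sum_HH_total (Q' : Nat.Partition (n+1)) :
    Q'.parts.count 1 +
      (∑ i ∈ Q'.parts.toFinset.filter (fun i => 2 ≤ i), i * Q'.parts.count i) = n + 1 := by
  have hsplit := Finset.sum_filter_add_sum_filter_not Q'.parts.toFinset (fun i => 2 ≤ i)
    (fun i => Q'.parts.count i * i)
  have hlow := sum_low Q'.parts (fun i h => Q'.parts_pos h)
  have hsum := sum_count_mul Q'.parts
  rw [Q'.parts_sum] at hsum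
  have hcomm : ∑ i ∈ Q'.parts.toFinset.filter (fun i => 2 ≤ i), i * Q'.parts.count i =
      ∑ i ∈ Q'.parts.toFinset.filter (fun i => 2 ≤ i), Q'.parts.count i * i :=
    Finset.sum_congr rfl (fun i _ => Nat.mul_comm _ _)
  omega

end PathPowAux

namespace PathPowAux

variable {n : ℕ}

lemma finset_sum_eq_multiset (s : Finset (Finset (Fin n))) (f : Finset (Fin n) → ℕ) :
    s.sum f = (s.val.map f).sum := rfl

lemma HT_z (Q' : Nat.Partition (n+1)) (T : Nat.Partition n) :
    ((if 1 ::ₘ T.parts = Q'.parts then 1 else 0) +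
      (T.parts.map (fun c =>
        c * (if (c+1) ::ₘ T.parts.erase c = Q'.parts then 1 else 0))).sum) * zM Q'.parts
    = zM T.parts *
      ((if 1 ::ₘ T.parts = Q'.parts then Q'.parts.count 1 else 0) +
       ∑ c ∈ T.parts.toFinset,
         (if (c+1) ::ₘ T.parts.erase c = Q'.parts then (c+1) * Q'.parts.count (c+1) else 0)) := by
  rw [Nat.add_mul, Nat.mul_add]
  congr 1
  · -- part (a)
    split_ifs with h
    · rw [← h, zM_cons, Multiset.count_cons_self]
      ring
    · simp
  · -- part (b)
    rw [Finset.sum_multiset_map_count, Finset.sum_mul, Finset.mul_sum]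
    refine Finset.sum_congr rfl ?_
    intro c hc
    have hcT : c ∈ T.parts := Multiset.mem_toFinset.1 hc
    rw [smul_eq_mul]
    split_ifs with h
    · have hzq : zM Q'.parts = (c+1) * ((T.parts.erase c).count (c+1) + 1) *
          zM (T.parts.erase c) := by
        rw [← h, zM_cons]
      have hzt : zM T.parts = c * ((T.parts.erase c).count c + 1) * zM (T.parts.erase c) := by
        conv_lhs => rw [← Multiset.cons_erase hcT]
        rw [zM_cons]
      have hcnt : T.parts.count c = (T.parts.erase c).count c + 1 := by
        conv_lhs => rw [← Multiset.cons_erase hcT]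
        rw [Multiset.count_cons_self]
      have hcnt' : Q'.parts.count (c+1) = (T.parts.erase c).count (c+1) + 1 := by
        rw [← h, Multiset.count_cons_self]
      rw [hzq, hzt, hcnt, hcnt']
      ring
    · simp

theorem key_count : ∀ (r : ℕ) (Q : Nat.Partition r), Ncard r Q * zM Q.parts = r.factorial := by
  intro r
  induction r with
  | zero =>
    intro Q
    have hQ : Q.parts = 0 := by
      rw [Multiset.eq_zero_iff_forall_notMem]
      intro a ha
      have h1 := Q.parts_pos ha
      have h2 : a ≤ Q.parts.sum := Multiset.single_le_sum (fun x _ => Nat.zero_le x) a ha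
      rw [Q.parts_sum] at h2
      omega
    have htype : ∀ w : Equiv.Perm (Fin 0), typeOf w = 0 := by
      intro w
      rw [typeOf, cyclesOf_eq_image]
      simp
    have hfilter : Finset.univ.filter (fun w : Equiv.Perm (Fin 0) => typeOf w = Q.parts) =
        Finset.univ := by
      refine Finset.filter_true_of_mem ?_
      intro w _
      rw [htype w, hQ]
    rw [Ncard, hfilter, hQ]
    simp [zM, Finset.card_univ]
  | succ n IH =>
    intro Q'
    -- Stage 1: expand the count via decomposeFin
    have stage1 : Ncard (n+1) Q' = ∑ e : Equiv.Perm (Fin n),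
        ((if 1 ::ₘ typeOf e = Q'.parts then 1 else 0) +
          ((typeOf e).map (fun c =>
            c * (if (c+1) ::ₘ (typeOf e).erase c = Q'.parts then 1 else 0))).sum) := by
      rw [Ncard, Finset.card_filter, Finset.univ_perm_fin_succ, Finset.sum_map,
        Fintype.sum_prod_type]
      rw [Finset.sum_comm]
      refine Finset.sum_congr rfl ?_
      intro e _
      rw [Fin.sum_univ_succ]
      congr 1
      · rw [show (Equiv.Perm.decomposeFin.symm.toEmbedding ((0 : Fin (n+1)), e)) =
            Equiv.Perm.decomposeFin.symm ((0 : Fin (n+1)), e) from rfl, typeOf_df_zero]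
      · have hterm : ∀ q : Fin n,
            (if typeOf (Equiv.Perm.decomposeFin.symm (q.succ, e)) = Q'.parts then 1 else 0) =
            (fun C : Finset (Fin n) =>
              if (C.card + 1) ::ₘ (typeOf e).erase C.card = Q'.parts then 1 else 0)
              (cl e q) := by
          intro q
          rw [typeOf_df_succ]
        calc ∑ q : Fin n, (if typeOf (Equiv.Perm.decomposeFin.symm.toEmbedding (q.succ, e))
              = Q'.parts then 1 else 0)
            = ∑ q : Fin n, (fun C : Finset (Fin n) =>
              if (C.card + 1) ::ₘ (typeOf e).erase C.card = Q'.parts then 1 else 0)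
              (cl e q) := Finset.sum_congr rfl (fun q _ => hterm q)
          _ = ∑ C ∈ cyclesOf e, C.card •
              (if (C.card + 1) ::ₘ (typeOf e).erase C.card = Q'.parts then 1 else 0) := by
            exact sum_cl e (fun C : Finset (Fin n) =>
              if (C.card + 1) ::ₘ (typeOf e).erase C.card = Q'.parts then 1 else 0)
          _ = ((typeOf e).map (fun c =>
              c * (if (c+1) ::ₘ (typeOf e).erase c = Q'.parts then 1 else 0))).sum := by
            rw [typeOf, finset_sum_eq_multiset, Multiset.map_map]
            rfl
    -- Stage 2: group by cycle type
    have stage2 : Ncard (n+1) Q' = ∑ T : Nat.Partition n, Ncard n T *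
        ((if 1 ::ₘ T.parts = Q'.parts then 1 else 0) +
          (T.parts.map (fun c =>
            c * (if (c+1) ::ₘ T.parts.erase c = Q'.parts then 1 else 0))).sum) := by
      rw [stage1, ← Finset.sum_fiberwise Finset.univ (fun e : Equiv.Perm (Fin n) => toPart e)]
      refine Finset.sum_congr rfl ?_
      intro T _
      have hfib : Finset.univ.filter (fun e : Equiv.Perm (Fin n) => toPart e = T) =
          Finset.univ.filter (fun e : Equiv.Perm (Fin n) => typeOf e = T.parts) := by
        refine Finset.filter_congr ?_
        intro e _
        constructor
        · intro h; exact congrArg Nat.Partition.parts h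
        · intro h; exact Nat.Partition.ext h
      rw [Finset.sum_congr hfib (fun e he => by
        have : typeOf e = T.parts := (Finset.mem_filter.1 he).2
        rw [this]), Finset.sum_const, smul_eq_mul]
      rfl
    -- Stage 3: multiply by z and use IH
    have stage3 : Ncard (n+1) Q' * zM Q'.parts = n.factorial *
        ((Q'.parts.count 1) +
          ∑ i ∈ Q'.parts.toFinset.filter (fun i => 2 ≤ i), i * Q'.parts.count i) := by
      rw [stage2, Finset.sum_mul]
      have hper : ∀ T : Nat.Partition n, (Ncard n T *
          ((if 1 ::ₘ T.parts = Q'.parts then 1 else 0) +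
            (T.parts.map (fun c =>
              c * (if (c+1) ::ₘ T.parts.erase c = Q'.parts then 1 else 0))).sum)) * zM Q'.parts
          = n.factorial *
            ((if 1 ::ₘ T.parts = Q'.parts then Q'.parts.count 1 else 0) +
             ∑ c ∈ T.parts.toFinset,
               (if (c+1) ::ₘ T.parts.erase c = Q'.parts
                then (c+1) * Q'.parts.count (c+1) else 0)) := by
        intro T
        rw [Nat.mul_assoc, HT_z Q' T, ← Nat.mul_assoc, IH T]
      rw [Finset.sum_congr rfl (fun T _ => hper T), ← Finset.mul_sum, Finset.sum_add_distrib,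
        sum_HH1, sum_HH2]
    rw [stage3, sum_HH_total, Nat.factorial_succ]
    ring

end PathPowAux

/-- The path power sum `p⃗_μ` specialized at `p : ℕ → R`. -/
def pathPow {r : ℕ} {R : Type*} [CommRing R] (p : ℕ → R) (μ : Fin r → ℕ) : R :=
  ∑ w : Equiv.Perm (Fin r), ∏ C ∈ cyclesOf w, p (∑ i ∈ C, μ i)

/-- `z_λ = ∏_i i^{m_i(λ)} m_i(λ)!`. -/
def zPart {r : ℕ} (Q : Nat.Partition r) : ℕ :=
  Q.parts.prod * ∏ i ∈ Q.parts.toFinset, (Q.parts.count i).factorial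

open PathPowAux

/-- For positive integers `k`, `r`, the path power sum of the rectangular partition `(k^r)`
satisfies `p⃗_{(k^r)} = r! · h_r[p_k]`, where the plethysm is computed from
`h_r = ∑_{λ ⊢ r} p_λ / z_λ` and `p_m[p_k] = p_{km}`, so that
`r! · h_r[p_k] = r! · ∑_{λ ⊢ r} z_λ⁻¹ p_{k·λ}`.  Equivalently,
`p⃗_{(k^r)} = ∑_{λ ⊢ r} |K_λ| · p_{k·λ}`, where `|K_λ| = r!/z_λ` is the size of the
conjugacy class of cycle type `λ` in `S_r` and `k·λ = (kλ_1, kλ_2, …)`. -/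
theorem pathPow_rectangular {F : Type*} [Field F] [CharZero F] (p : ℕ → F)
    (k r : ℕ) (hk : 0 < k) (hr : 0 < r) :
    pathPow p (fun _ : Fin r => k) =
        (r.factorial : F) *
          ∑ Q : Nat.Partition r, ((zPart Q : F))⁻¹ * (Q.parts.map (fun m => p (k * m))).prod ∧
      pathPow p (fun _ : Fin r => k) =
        ∑ Q : Nat.Partition r,
          (Nat.card {w : Equiv.Perm (Fin r) // typeOf w = Q.parts} : F) *
            (Q.parts.map (fun m => p (k * m))).prod := by
  classical
  have hprod : ∀ w : Equiv.Perm (Fin r),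
      (∏ C ∈ cyclesOf w, p (∑ _i ∈ C, k)) =
      ((typeOf w).map (fun m => p (k * m))).prod := by
    intro w
    have h1 : ∀ C : Finset (Fin r), (∑ _i ∈ C, k) = k * C.card := by
      intro C
      rw [Finset.sum_const, smul_eq_mul, Nat.mul_comm]
    rw [Finset.prod_congr rfl (fun C _ => congrArg p (h1 C)), typeOf, Multiset.map_map]
    rfl
  have claim2 : pathPow p (fun _ : Fin r => k) =
      ∑ Q : Nat.Partition r, (Ncard r Q : F) * (Q.parts.map (fun m => p (k * m))).prod := by
    rw [pathPow, Finset.sum_congr rfl (fun w _ => hprod w),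
      ← Finset.sum_fiberwise Finset.univ (fun w : Equiv.Perm (Fin r) => PathPowAux.toPart w)]
    refine Finset.sum_congr rfl ?_
    intro Q _
    have hfib : Finset.univ.filter (fun w : Equiv.Perm (Fin r) => PathPowAux.toPart w = Q) =
        Finset.univ.filter (fun w : Equiv.Perm (Fin r) => typeOf w = Q.parts) := by
      refine Finset.filter_congr ?_
      intro w _
      constructor
      · intro h; exact congrArg Nat.Partition.parts h
      · intro h; exact Nat.Partition.ext h
    rw [Finset.sum_congr hfib (fun w hw => by
      have hw' : typeOf w = Q.parts := (Finset.mem_filter.1 hw).2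
      rw [hw']), Finset.sum_const, nsmul_eq_mul]
    rfl
  have hNat : ∀ Q : Nat.Partition r,
      (Nat.card {w : Equiv.Perm (Fin r) // typeOf w = Q.parts}) = Ncard r Q := by
    intro Q
    rw [Nat.card_eq_fintype_card, Fintype.card_subtype]
    rfl
  have hzpos : ∀ Q : Nat.Partition r, 0 < zPart Q := by
    intro Q
    exact zM_pos (fun i hi => Q.parts_pos hi)
  constructor
  · rw [claim2, Finset.mul_sum]
    refine Finset.sum_congr rfl ?_
    intro Q _
    have hkey := key_count r Q
    have hz : (zPart Q : F) ≠ 0 := by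
      exact_mod_cast (hzpos Q).ne'
    have hcast : (Ncard r Q : F) * (zPart Q : F) = (r.factorial : F) := by
      exact_mod_cast congrArg (fun x : ℕ => (x : F)) hkey
    have hN : (Ncard r Q : F) = (r.factorial : F) * ((zPart Q : F))⁻¹ := by
      rw [eq_mul_inv_iff_mul_eq₀ hz]
      exact hcast
    rw [hN, mul_assoc]
  · rw [claim2]
    refine Finset.sum_congr rfl ?_
    intro Q _
    rw [hNat Q]
end

section
/- Hurwitz's binomial identity: for variables x, y, z_1, …, z_k, (x+y)(x+y+z_{[k]})^{k−1} = x(x+z_{[k]})^{k−1} + y(y+z_{[k]})^{k−1} + xy ∑_{[k]=S⊔T, S,T≠∅} (x+z_S)^{|S|−1}(y+z_T)^{|T|−1}, where z_R = ∑_{i∈R} z_i and the sum is over ordered partitions of [k] into two nonempty sets. -/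
open Finset

section Hurwitz

variable {R : Type*} [CommRing R] {ι : Type*} [DecidableEq ι]

/-- `gg z x S = x (x + z_S)^{|S|-1}`, with convention `gg z x ∅ = 1`. -/
def gg (z : ι → R) (x : R) (S : Finset ι) : R :=
  if S = ∅ then 1 else x * (x + ∑ i ∈ S, z i) ^ (S.card - 1)

lemma gg_empty (z : ι → R) (x : R) : gg z x (∅ : Finset ι) = 1 := by simp [gg]

lemma gg_insert (z : ι → R) (x : R) {a : ι} {S : Finset ι} (ha : a ∉ S) :
    gg z x (insert a S) = x * (x + z a + ∑ i ∈ S, z i) ^ S.card := by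
  have h1 : insert a S ≠ ∅ := (insert_nonempty a S).ne_empty
  rw [gg, if_neg h1, card_insert_of_notMem ha, sum_insert ha, Nat.add_sub_cancel, add_assoc]

lemma gg_mul (z : ι → R) (x : R) (S : Finset ι) :
    gg z x S * (x + ∑ i ∈ S, z i) = x * (x + ∑ i ∈ S, z i) ^ S.card := by
  rcases eq_or_ne S ∅ with h | h
  · subst h; simp [gg]
  · rw [gg, if_neg h]
    have hc : S.card - 1 + 1 = S.card :=
      Nat.succ_pred_eq_of_pos (card_pos.2 (nonempty_of_ne_empty h))
    rw [mul_assoc, ← pow_succ, hc]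

/-- reindexing a powerset sum by complement. -/
lemma sum_powerset_compl (A : Finset ι) (f : Finset ι → Finset ι → R) :
    ∑ S ∈ A.powerset, f S (A \ S) = ∑ S ∈ A.powerset, f (A \ S) S := by
  refine sum_nbij' (fun S => A \ S) (fun S => A \ S) ?_ ?_ ?_ ?_ ?_
  · intro S hS; exact mem_powerset.2 (sdiff_subset)
  · intro S hS; exact mem_powerset.2 (sdiff_subset)
  · intro S hS; exact Finset.sdiff_sdiff_eq_self (mem_powerset.1 hS)
  · intro S hS; exact Finset.sdiff_sdiff_eq_self (mem_powerset.1 hS)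
  · intro S hS; rw [Finset.sdiff_sdiff_eq_self (mem_powerset.1 hS)]

/-- Shift lemma: the symmetric full-power sum depends only on p+q, assuming
the Hurwitz A identity on all subsets. -/
lemma Cshift (z : ι → R) (A : Finset ι)
    (hA : ∀ B ∈ A.powerset, ∀ u v : R,
      ∑ S ∈ B.powerset, gg z u S * (v + ∑ i ∈ B \ S, z i) ^ (B \ S).card
        = (u + v + ∑ i ∈ B, z i) ^ B.card)
    (p q w : R) :
    ∑ S ∈ A.powerset, (p + w + ∑ i ∈ S, z i) ^ S.card * (q + ∑ i ∈ A \ S, z i) ^ (A \ S).card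
      = ∑ S ∈ A.powerset,
          (p + ∑ i ∈ S, z i) ^ S.card * (q + w + ∑ i ∈ A \ S, z i) ^ (A \ S).card := by
  have hL : ∀ S ∈ A.powerset, (p + w + ∑ i ∈ S, z i) ^ S.card
      = ∑ T ∈ S.powerset, gg z w T * (p + ∑ i ∈ S \ T, z i) ^ (S \ T).card := by
    intro S hS
    rw [hA S hS w p]
    ring_nf
  have hR : ∀ S ∈ A.powerset, (q + w + ∑ i ∈ A \ S, z i) ^ (A \ S).card
      = ∑ T ∈ (A \ S).powerset, gg z w T * (q + ∑ i ∈ (A \ S) \ T, z i) ^ ((A \ S) \ T).card := by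
    intro S hS
    rw [hA (A \ S) (mem_powerset.2 sdiff_subset) w q]
    ring_nf
  calc
    ∑ S ∈ A.powerset, (p + w + ∑ i ∈ S, z i) ^ S.card * (q + ∑ i ∈ A \ S, z i) ^ (A \ S).card
        = ∑ S ∈ A.powerset, ∑ T ∈ S.powerset,
            gg z w T * (p + ∑ i ∈ S \ T, z i) ^ (S \ T).card
              * (q + ∑ i ∈ A \ S, z i) ^ (A \ S).card := by
          refine sum_congr rfl fun S hS => ?_
          rw [hL S hS, sum_mul]
    _ = ∑ S ∈ A.powerset, ∑ T ∈ (A \ S).powerset,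
            (p + ∑ i ∈ S, z i) ^ S.card *
              (gg z w T * (q + ∑ i ∈ (A \ S) \ T, z i) ^ ((A \ S) \ T).card) := by
          rw [sum_sigma', sum_sigma']
          refine sum_nbij' (fun x => ⟨x.1 \ x.2, x.2⟩) (fun x => ⟨x.1 ∪ x.2, x.2⟩)
            ?_ ?_ ?_ ?_ ?_
          · rintro ⟨S, T⟩ hST
            rw [mem_sigma, mem_powerset, mem_powerset] at hST ⊢
            obtain ⟨hSA, hTS⟩ := hST
            constructor
            · exact sdiff_subset.trans hSA
            · intro i hi
              simp only [mem_sdiff]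
              exact ⟨hSA (hTS hi), fun h => h.2 hi⟩
          · rintro ⟨S, T⟩ hST
            rw [mem_sigma, mem_powerset, mem_powerset] at hST ⊢
            obtain ⟨hSA, hTAS⟩ := hST
            refine ⟨union_subset hSA (fun i hi => (mem_sdiff.1 (hTAS hi)).1), subset_union_right⟩
          · rintro ⟨S, T⟩ hST
            rw [mem_sigma, mem_powerset, mem_powerset] at hST
            obtain ⟨hSA, hTS⟩ := hST
            have : S \ T ∪ T = S := by
              ext i; simp only [mem_union, mem_sdiff]; constructor
              · rintro (⟨h, _⟩ | h); exact h; exact hTS h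
              · intro h; by_cases hT : i ∈ T
                · exact Or.inr hT
                · exact Or.inl ⟨h, hT⟩
            simp [this]
          · rintro ⟨S, T⟩ hST
            rw [mem_sigma, mem_powerset, mem_powerset] at hST
            obtain ⟨hSA, hTAS⟩ := hST
            have hd : Disjoint S T := by
              rw [disjoint_right]; intro i hi; exact (mem_sdiff.1 (hTAS hi)).2
            have : (S ∪ T) \ T = S := by
              rw [union_sdiff_right, sdiff_eq_self_of_disjoint hd]
            simp [this]
          · rintro ⟨S, T⟩ hST
            rw [mem_sigma, mem_powerset, mem_powerset] at hST
            obtain ⟨hSA, hTS⟩ := hST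
            have h1 : (A \ (S \ T)) \ T = A \ S := by
              ext i
              simp only [mem_sdiff]
              constructor
              · rintro ⟨⟨hiA, hn⟩, hnT⟩
                refine ⟨hiA, fun hiS => hn ⟨hiS, hnT⟩⟩
              · rintro ⟨hiA, hnS⟩
                exact ⟨⟨hiA, fun h => hnS h.1⟩, fun h => hnS (hTS h)⟩
            rw [h1]
            ring
    _ = ∑ S ∈ A.powerset,
          (p + ∑ i ∈ S, z i) ^ S.card * (q + w + ∑ i ∈ A \ S, z i) ^ (A \ S).card := by
          refine sum_congr rfl fun S hS => ?_
          rw [hR S hS, mul_sum]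

/-- Hurwitz A identity. -/
lemma hurwitzA (z : ι → R) (A : Finset ι) : ∀ u v : R,
    ∑ S ∈ A.powerset, gg z u S * (v + ∑ i ∈ A \ S, z i) ^ (A \ S).card
      = (u + v + ∑ i ∈ A, z i) ^ A.card := by
  induction A using Finset.strongInduction with
  | _ A ih =>
    rcases A.eq_empty_or_nonempty with rfl | ⟨a, ha⟩
    · intro u v; simp [gg]
    intro u v
    set A' := A.erase a with hA'
    have ha' : a ∉ A' := notMem_erase a A
    have hAeq : A = insert a A' := (insert_erase ha).symm
    have hss : A' ⊂ A := erase_ssubset ha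
    have ihA' := ih A' hss
    rw [hAeq, sum_powerset_insert ha']
    -- rewrite the two sums
    have e1 : ∀ S ∈ A'.powerset,
        gg z u S * (v + ∑ i ∈ (insert a A') \ S, z i) ^ ((insert a A') \ S).card
        = gg z u S * ((v + z a + ∑ i ∈ A' \ S, z i) ^ (A' \ S).card
            * (v + z a + ∑ i ∈ A' \ S, z i)) := by
      intro S hS
      have hSA : S ⊆ A' := mem_powerset.1 hS
      have haS : a ∉ S := fun h => ha' (hSA h)
      have h2 : (insert a A') \ S = insert a (A' \ S) := by
        ext i; simp only [mem_sdiff, mem_insert]; constructor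
        · rintro ⟨h | h, hn⟩
          · exact Or.inl h
          · exact Or.inr ⟨h, hn⟩
        · rintro (rfl | ⟨h, hn⟩)
          · exact ⟨Or.inl rfl, haS⟩
          · exact ⟨Or.inr h, hn⟩
      have haAS : a ∉ A' \ S := fun h => ha' (mem_sdiff.1 h).1
      rw [h2, card_insert_of_notMem haAS, sum_insert haAS, pow_succ, add_assoc]
    have e2 : ∀ S ∈ A'.powerset,
        gg z u (insert a S) * (v + ∑ i ∈ (insert a A') \ (insert a S), z i)
            ^ ((insert a A') \ (insert a S)).card
        = u * (u + z a + ∑ i ∈ S, z i) ^ S.card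
            * (v + ∑ i ∈ A' \ S, z i) ^ (A' \ S).card := by
      intro S hS
      have hSA : S ⊆ A' := mem_powerset.1 hS
      have haS : a ∉ S := fun h => ha' (hSA h)
      have h2 : (insert a A') \ (insert a S) = A' \ S := by
        ext i; simp only [mem_sdiff, mem_insert, not_or]; constructor
        · rintro ⟨h | h, hn1, hn2⟩
          · exact absurd h hn1
          · exact ⟨h, hn2⟩
        · rintro ⟨h, hn⟩
          exact ⟨Or.inr h, fun heq => ha' (heq ▸ h), hn⟩
      rw [h2, gg_insert z u haS]
    rw [sum_congr rfl e1, sum_congr rfl e2]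
    -- key algebraic split
    have hkey : ∀ S ∈ A'.powerset,
        gg z u S * ((v + z a + ∑ i ∈ A' \ S, z i) ^ (A' \ S).card
            * (v + z a + ∑ i ∈ A' \ S, z i))
          + u * (u + ∑ i ∈ S, z i) ^ S.card * (v + z a + ∑ i ∈ A' \ S, z i) ^ (A' \ S).card
        = (u + (v + z a) + ∑ i ∈ A', z i)
            * (gg z u S * (v + z a + ∑ i ∈ A' \ S, z i) ^ (A' \ S).card) := by
      intro S hS
      have hSA : S ⊆ A' := mem_powerset.1 hS
      have hsum : (∑ i ∈ A' \ S, z i) + ∑ i ∈ S, z i = ∑ i ∈ A', z i := sum_sdiff hSA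
      have hg := gg_mul z u S
      rw [← hsum]
      linear_combination (-(v + z a + ∑ i ∈ A' \ S, z i) ^ (A' \ S).card) * hg
    have hB : ∀ B ∈ A'.powerset, ∀ u v : R,
        ∑ S ∈ B.powerset, gg z u S * (v + ∑ i ∈ B \ S, z i) ^ (B \ S).card
          = (u + v + ∑ i ∈ B, z i) ^ B.card := by
      intro B hBmem
      exact ih B (lt_of_le_of_lt (mem_powerset.1 hBmem) hss)
    have hCs := Cshift z A' hB u v (z a)
    have hE2 : ∑ S ∈ A'.powerset,
        u * (u + z a + ∑ i ∈ S, z i) ^ S.card * (v + ∑ i ∈ A' \ S, z i) ^ (A' \ S).card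
        = ∑ S ∈ A'.powerset,
            u * (u + ∑ i ∈ S, z i) ^ S.card * (v + z a + ∑ i ∈ A' \ S, z i) ^ (A' \ S).card := by
      simp only [mul_assoc]
      rw [← mul_sum, ← mul_sum, hCs]
    rw [hE2]
    have h1 : (∑ S ∈ A'.powerset,
          gg z u S * ((v + z a + ∑ i ∈ A' \ S, z i) ^ (A' \ S).card
            * (v + z a + ∑ i ∈ A' \ S, z i)))
        + ∑ S ∈ A'.powerset,
            u * (u + ∑ i ∈ S, z i) ^ S.card * (v + z a + ∑ i ∈ A' \ S, z i) ^ (A' \ S).card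
        = (u + (v + z a) + ∑ i ∈ A', z i)
            * (u + (v + z a) + ∑ i ∈ A', z i) ^ A'.card := by
      rw [← sum_add_distrib]
      conv_rhs => rw [← ihA' u (v + z a), mul_sum]
      exact sum_congr rfl hkey
    rw [h1, sum_insert ha', card_insert_of_notMem ha']
    rw [← pow_succ']
    ring_nf
/-- Hurwitz B identity in powerset form. -/
lemma hurwitzB (z : ι → R) (A : Finset ι) (hA : A.Nonempty) (x y : R) :
    ∑ S ∈ A.powerset, gg z x S * gg z y (A \ S)
      = (x + y) * (x + y + ∑ i ∈ A, z i) ^ (A.card - 1) := by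
  obtain ⟨a, ha⟩ := hA
  set A' := A.erase a with hA'
  have ha' : a ∉ A' := notMem_erase a A
  have hAeq : A = insert a A' := (insert_erase ha).symm
  rw [hAeq, sum_powerset_insert ha']
  have e1 : ∀ S ∈ A'.powerset,
      gg z x S * gg z y ((insert a A') \ S)
      = y * (gg z x S * (y + z a + ∑ i ∈ A' \ S, z i) ^ (A' \ S).card) := by
    intro S hS
    have hSA : S ⊆ A' := mem_powerset.1 hS
    have haS : a ∉ S := fun h => ha' (hSA h)
    have h2 : (insert a A') \ S = insert a (A' \ S) := by
      ext i; simp only [mem_sdiff, mem_insert]; constructor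
      · rintro ⟨h | h, hn⟩
        · exact Or.inl h
        · exact Or.inr ⟨h, hn⟩
      · rintro (rfl | ⟨h, hn⟩)
        · exact ⟨Or.inl rfl, haS⟩
        · exact ⟨Or.inr h, hn⟩
    have haAS : a ∉ A' \ S := fun h => ha' (mem_sdiff.1 h).1
    rw [h2, gg_insert z y haAS]
    ring
  have e2 : ∀ S ∈ A'.powerset,
      gg z x (insert a S) * gg z y ((insert a A') \ (insert a S))
      = x * (x + z a + ∑ i ∈ S, z i) ^ S.card * gg z y (A' \ S) := by
    intro S hS
    have hSA : S ⊆ A' := mem_powerset.1 hS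
    have haS : a ∉ S := fun h => ha' (hSA h)
    have h2 : (insert a A') \ (insert a S) = A' \ S := by
      ext i; simp only [mem_sdiff, mem_insert, not_or]; constructor
      · rintro ⟨h | h, hn1, hn2⟩
        · exact absurd h hn1
        · exact ⟨h, hn2⟩
      · rintro ⟨h, hn⟩
        exact ⟨Or.inr h, fun heq => ha' (heq ▸ h), hn⟩
    rw [h2, gg_insert z x haS]
  rw [sum_congr rfl e1, sum_congr rfl e2]
  have h1 : ∑ S ∈ A'.powerset,
      y * (gg z x S * (y + z a + ∑ i ∈ A' \ S, z i) ^ (A' \ S).card)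
      = y * (x + (y + z a) + ∑ i ∈ A', z i) ^ A'.card := by
    rw [← mul_sum, hurwitzA z A' x (y + z a)]
  have h2 : ∑ S ∈ A'.powerset,
      x * (x + z a + ∑ i ∈ S, z i) ^ S.card * gg z y (A' \ S)
      = x * (y + (x + z a) + ∑ i ∈ A', z i) ^ A'.card := by
    rw [sum_powerset_compl A'
      (fun S T => x * (x + z a + ∑ i ∈ S, z i) ^ S.card * gg z y T)]
    have : ∀ S ∈ A'.powerset,
        x * (x + z a + ∑ i ∈ A' \ S, z i) ^ (A' \ S).card * gg z y S
        = x * (gg z y S * (x + z a + ∑ i ∈ A' \ S, z i) ^ (A' \ S).card) := by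
      intro S hS; ring
    rw [sum_congr rfl this, ← mul_sum, hurwitzA z A' y (x + z a)]
  rw [h1, h2, sum_insert ha', card_insert_of_notMem ha', Nat.add_sub_cancel]
  ring_nf

end Hurwitz

/-- Hurwitz's binomial identity: for elements `x, y, z_1, …, z_k` of a commutative ring,
`(x+y)(x+y+z_{[k]})^{k−1} = x(x+z_{[k]})^{k−1} + y(y+z_{[k]})^{k−1}
  + xy ∑_{[k]=S⊔T, S,T≠∅} (x+z_S)^{|S|−1} (y+z_T)^{|T|−1}`,
where `z_R = ∑_{i∈R} z_i` and the sum is over ordered partitions of `[k]` into two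
nonempty sets. -/
theorem hurwitz_binomial {R : Type*} [CommRing R] (k : ℕ) (x y : R) (z : Fin k → R) :
    (x + y) * (x + y + ∑ i, z i) ^ (k - 1) =
      x * (x + ∑ i, z i) ^ (k - 1) + y * (y + ∑ i, z i) ^ (k - 1) +
        x * y *
          ∑ S ∈ Finset.univ.filter (fun S : Finset (Fin k) => S.Nonempty ∧ Sᶜ.Nonempty),
            (x + ∑ i ∈ S, z i) ^ (S.card - 1) * (y + ∑ i ∈ Sᶜ, z i) ^ (Sᶜ.card - 1) := by
  rcases Nat.eq_zero_or_pos k with rfl | hk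
  · have h0 : ∀ S : Finset (Fin 0), S = ∅ := fun S => Finset.eq_empty_of_isEmpty S
    rw [Finset.filter_false_of_mem (fun S _ => by rw [h0 S]; simp)]
    simp
  haveI : Nonempty (Fin k) := Fin.pos_iff_nonempty.1 hk
  have hcard : (univ : Finset (Fin k)).card = k := by
    rw [card_univ, Fintype.card_fin]
  have hB := hurwitzB z (univ : Finset (Fin k)) univ_nonempty x y
  rw [hcard] at hB
  have hcompl : ∀ S : Finset (Fin k), univ \ S = Sᶜ := by
    intro S; rw [compl_eq_univ_sdiff]
  rw [powerset_univ] at hB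
  have hsplit := sum_filter_add_sum_filter_not (univ : Finset (Finset (Fin k)))
    (fun S => S.Nonempty ∧ Sᶜ.Nonempty) (fun S => gg z x S * gg z y (univ \ S))
  have hfilter : (univ : Finset (Finset (Fin k))).filter
      (fun S => ¬(S.Nonempty ∧ Sᶜ.Nonempty)) = {∅, univ} := by
    ext S
    simp only [mem_filter, mem_univ, true_and, mem_insert, mem_singleton,
      not_and_or, not_nonempty_iff_eq_empty, compl_eq_empty_iff]
  have hne : (∅ : Finset (Fin k)) ≠ univ := by
    intro h
    have := univ_nonempty (α := Fin k)
    rw [← h] at this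
    exact not_nonempty_empty this
  have hrest : ∑ S ∈ (univ : Finset (Finset (Fin k))).filter
      (fun S => ¬(S.Nonempty ∧ Sᶜ.Nonempty)), gg z x S * gg z y (univ \ S)
      = y * (y + ∑ i, z i) ^ (k - 1) + x * (x + ∑ i, z i) ^ (k - 1) := by
    rw [hfilter, sum_pair hne]
    have h1 : (univ : Finset (Fin k)) \ ∅ = univ := sdiff_empty
    have h2 : (univ : Finset (Fin k)) \ univ = ∅ := Finset.sdiff_self univ
    rw [h1, h2, gg_empty, gg_empty]
    rw [gg, gg, if_neg (univ_nonempty (α := Fin k)).ne_empty,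
      if_neg (univ_nonempty (α := Fin k)).ne_empty, hcard]
    ring
  have hmain : ∑ S ∈ (univ : Finset (Finset (Fin k))).filter
      (fun S => S.Nonempty ∧ Sᶜ.Nonempty), gg z x S * gg z y (univ \ S)
      = x * y * ∑ S ∈ (univ : Finset (Finset (Fin k))).filter
          (fun S => S.Nonempty ∧ Sᶜ.Nonempty),
          (x + ∑ i ∈ S, z i) ^ (S.card - 1) * (y + ∑ i ∈ Sᶜ, z i) ^ (Sᶜ.card - 1) := by
    rw [mul_sum]
    refine sum_congr rfl fun S hS => ?_
    obtain ⟨hS1, hS2⟩ := (mem_filter.1 hS).2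
    rw [hcompl, gg, gg, if_neg hS1.ne_empty, if_neg hS2.ne_empty]
    ring
  rw [← hsplit, hrest, hmain] at hB
  linear_combination -hB
end

section
/- Falling factorial identity: let a, b, μ_1, …, μ_t be positive integers with μ_1 + ⋯ + μ_t < min(a,b). Then (a+b)·(a+b−μ_{[t]}+t−1)_{t−1} = a·(a−μ_{[t]}+t−1)_{t−1} + b·(b−μ_{[t]}+t−1)_{t−1} + ∑_{[t]=A⊔B, A,B≠∅} ab·(a−μ_A+|A|−1)_{|A|−1}·(b−μ_B+|B|−1)_{|B|−1}, where (x)_m = x(x−1)⋯(x−m+1), μ_S = ∑_{i∈S} μ_i, and the sum runs over ordered partitions of [t] into two nonempty sets. (The identity holds as a polynomial identity in a, b, μ_1,…,μ_t.) -/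
/-!
Write `F(x, w, n) = x (x - w + n - 1)_{n-1}` (and `F(x, w, 0) = 1`). The theorem is the case
`S = [t]` of a falling-factorial form of Hurwitz's generalisation of Abel's identity: for every
finite set `S` and all integer weights `μ`,
`F(a + b, μ_S, |S|) = ∑_{A ⊆ S} F(a, μ_A, |A|) F(b, μ_{S \ A}, |S \ A|)`.
It is proved by strong induction on `S`. Raising one weight `μ_n` by one does not change the
difference of the two sides: `F(x, w, k + 1) - F(x, w + 1, k + 1) = k F(x, w, k)`, and after
this difference is taken, both sides become sums of `|S| - 1` copies of the identity for
`S \ {n}`, one for each way of merging `μ_n` into another weight `μ_i`. So the difference is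
independent of the weights, and at `μ = 1` it vanishes because `F(x, m, m) = (x)_m` and the
identity becomes the Chu–Vandermonde identity.
-/

open Finset

lemma Function.periodic_sum_pi_single {ι α : Type*} [DecidableEq ι] {f : (ι → ℤ) → α}
    {S : Finset ι} (h : ∀ i ∈ S, Periodic f (Pi.single i 1)) (c : ι → ℤ) :
    Periodic f (∑ i ∈ S, Pi.single i (c i)) :=
  sum_induction _ (Periodic f) (fun _ _ => Periodic.add_period) (periodic_with_period_zero f)
    fun i hi => by simpa [← Pi.single_smul'] using (h i hi).zsmul (c i)

lemma Finset.sum_eq_univ_add_empty_add_sum_proper {α M : Type*} [Fintype α] [Nonempty α]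
    [DecidableEq α] [AddCommMonoid M] (f : Finset α → M) :
    ∑ A, f A = f univ + f ∅
      + ∑ A ∈ univ.filter (fun A : Finset α => A.Nonempty ∧ Aᶜ.Nonempty), f A := by
  have hproper : univ.filter (fun A : Finset α => ¬(A.Nonempty ∧ Aᶜ.Nonempty)) = {univ, ∅} := by
    ext A
    simp only [mem_filter, mem_univ, true_and, not_and_or, not_nonempty_iff_eq_empty,
      compl_eq_empty_iff, mem_insert, mem_singleton, or_comm]
  rw [← sum_filter_not_add_sum_filter univ (fun A : Finset α => A.Nonempty ∧ Aᶜ.Nonempty),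
    hproper, sum_pair univ_nonempty.ne_empty]

/-- `fallingAbel x w (n + 1) = x (x - w + n)_n = x (x - w + 1)(x - w + 2) ⋯ (x - w + n)`. -/
noncomputable def fallingAbel (x w : ℤ) : ℕ → ℤ
  | 0 => 1
  | n + 1 => x * (ascPochhammer ℤ n).eval (x - w + 1)

lemma fallingAbel_zero (x w : ℤ) : fallingAbel x w 0 = 1 := rfl

lemma fallingAbel_succ_sub_fallingAbel_add_one (x w : ℤ) (k : ℕ) :
    fallingAbel x w (k + 1) - fallingAbel x (w + 1) (k + 1) = k * fallingAbel x w k := by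
  cases k with
  | zero => simp [fallingAbel]
  | succ m =>
    have hshift : (ascPochhammer ℤ (m + 1)).eval (x - (w + 1) + 1)
        = (x - w) * (ascPochhammer ℤ m).eval (x - w + 1) := by
      simp only [ascPochhammer_succ_left, Polynomial.eval_mul, Polynomial.eval_X,
        Polynomial.eval_comp, Polynomial.eval_add, Polynomial.eval_one]
      rw [show x - (w + 1) + 1 = x - w by ring]
    simp only [fallingAbel, ascPochhammer_succ_eval, hshift]
    push_cast
    ring

lemma fallingAbel_self (x : ℤ) (n : ℕ) : fallingAbel x n n = (descPochhammer ℤ n).eval x := by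
  cases n with
  | zero => simp [fallingAbel]
  | succ m =>
    simp only [fallingAbel, descPochhammer_succ_left, Polynomial.eval_mul, Polynomial.eval_X,
      Polynomial.eval_comp, Polynomial.eval_sub, Polynomial.eval_one,
      descPochhammer_eval_eq_ascPochhammer]
    congr 2
    push_cast
    ring

lemma fallingAbel_natCast {x w n : ℕ} (hw : w ≤ x) (hn : 0 < n) :
    fallingAbel x w n = ((x * (x - w + n - 1).descFactorial (n - 1) : ℕ) : ℤ) := by
  obtain ⟨m, rfl⟩ := Nat.exists_eq_add_one_of_ne_zero hn.ne'
  have hcast : (x : ℤ) - w + 1 = ((x - w + 1 : ℕ) : ℤ) := by push_cast [Nat.cast_sub hw]; ring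
  rw [fallingAbel, hcast, ascPochhammer_nat_eq_natCast_descFactorial]
  push_cast
  congr 3
  omega

section Hurwitz

variable {ι : Type*} [DecidableEq ι] (a b : ℤ)

noncomputable def hurwitzSum (S : Finset ι) (μ : ι → ℤ) : ℤ :=
  ∑ A ∈ S.powerset, fallingAbel a (∑ i ∈ A, μ i) #A * fallingAbel b (∑ i ∈ S \ A, μ i) #(S \ A)

noncomputable def hurwitzDefect (S : Finset ι) (μ : ι → ℤ) : ℤ :=
  fallingAbel (a + b) (∑ i ∈ S, μ i) #S - hurwitzSum a b S μ

lemma hurwitzSum_insert {T : Finset ι} {n : ι} (hn : n ∉ T) (μ : ι → ℤ) :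
    hurwitzSum a b (insert n T) μ = ∑ A ∈ T.powerset,
      (fallingAbel a (∑ i ∈ A, μ i) #A * fallingAbel b (μ n + ∑ i ∈ T \ A, μ i) (#(T \ A) + 1)
        + fallingAbel a (μ n + ∑ i ∈ A, μ i) (#A + 1)
          * fallingAbel b (∑ i ∈ T \ A, μ i) #(T \ A)) := by
  rw [hurwitzSum, sum_powerset_insert hn, ← sum_add_distrib]
  refine sum_congr rfl fun A hA => ?_
  have hnA : n ∉ A := fun h => hn (mem_powerset.mp hA h)
  have hnTA : n ∉ T \ A := fun h => hn (mem_sdiff.mp h).1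
  rw [insert_sdiff_of_notMem _ hnA, insert_sdiff_insert, sdiff_insert_of_notMem hn,
    sum_insert hnTA, card_insert_of_notMem hnTA, sum_insert hnA, card_insert_of_notMem hnA]

lemma sum_hurwitzSum_add_single (T : Finset ι) (μ : ι → ℤ) (c : ℤ) :
    ∑ i ∈ T, hurwitzSum a b T (μ + Pi.single i c) = ∑ A ∈ T.powerset,
      (#A * (fallingAbel a (c + ∑ i ∈ A, μ i) #A * fallingAbel b (∑ i ∈ T \ A, μ i) #(T \ A))
        + #(T \ A) * (fallingAbel a (∑ i ∈ A, μ i) #A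
          * fallingAbel b (c + ∑ i ∈ T \ A, μ i) #(T \ A))) := by
  simp only [hurwitzSum]
  rw [sum_comm]
  refine sum_congr rfl fun A hA => ?_
  have hsplit : ∀ i ∈ T, fallingAbel a (∑ j ∈ A, (μ + Pi.single i c : ι → ℤ) j) #A
        * fallingAbel b (∑ j ∈ T \ A, (μ + Pi.single i c : ι → ℤ) j) #(T \ A)
      = if i ∈ A
        then fallingAbel a (c + ∑ i ∈ A, μ i) #A * fallingAbel b (∑ i ∈ T \ A, μ i) #(T \ A)
        else fallingAbel a (∑ i ∈ A, μ i) #A * fallingAbel b (c + ∑ i ∈ T \ A, μ i) #(T \ A) := by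
    intro i hi
    by_cases hiA : i ∈ A <;> simp [sum_add_distrib, hiA, hi, add_comm]
  rw [sum_congr rfl hsplit, sum_ite, filter_not, filter_mem_eq_inter,
    inter_eq_right.mpr (mem_powerset.mp hA), sum_const, sum_const, nsmul_eq_mul, nsmul_eq_mul]

lemma hurwitzSum_sub_hurwitzSum_add_single {T : Finset ι} {n : ι} (hn : n ∉ T) (μ : ι → ℤ) :
    hurwitzSum a b (insert n T) μ - hurwitzSum a b (insert n T) (μ + Pi.single n 1)
      = ∑ i ∈ T, hurwitzSum a b T (μ + Pi.single i (μ n)) := by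
  rw [hurwitzSum_insert a b hn, hurwitzSum_insert a b hn, sum_hurwitzSum_add_single,
    ← sum_sub_distrib]
  refine sum_congr rfl fun A hA => ?_
  have hnA : n ∉ A := fun h => hn (mem_powerset.mp hA h)
  have hnTA : n ∉ T \ A := fun h => hn (mem_sdiff.mp h).1
  simp only [Pi.add_apply, sum_add_distrib, sum_pi_single', hnA, hnTA, if_false, add_zero,
    Pi.single_eq_same]
  have ha := fallingAbel_succ_sub_fallingAbel_add_one a (μ n + ∑ i ∈ A, μ i) #A
  have hb := fallingAbel_succ_sub_fallingAbel_add_one b (μ n + ∑ i ∈ T \ A, μ i) #(T \ A)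
  rw [add_right_comm] at ha hb
  linear_combination fallingAbel b (∑ i ∈ T \ A, μ i) #(T \ A) * ha
    + fallingAbel a (∑ i ∈ A, μ i) #A * hb

lemma hurwitzDefect_add_single {T : Finset ι} {n : ι} (hn : n ∉ T)
    (ih : ∀ ρ : ι → ℤ, fallingAbel (a + b) (∑ i ∈ T, ρ i) #T = hurwitzSum a b T ρ)
    (μ : ι → ℤ) :
    hurwitzDefect a b (insert n T) (μ + Pi.single n 1) = hurwitzDefect a b (insert n T) μ := by
  have hmerge : ∀ i ∈ T, hurwitzSum a b T (μ + Pi.single i (μ n))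
      = fallingAbel (a + b) (∑ j ∈ insert n T, μ j) #T := by
    intro i hi
    rw [← ih, sum_insert hn]
    simp only [Pi.add_apply, sum_add_distrib, sum_pi_single', if_pos hi, add_comm]
  have hstep := hurwitzSum_sub_hurwitzSum_add_single a b hn μ
  rw [sum_congr rfl hmerge, sum_const, nsmul_eq_mul] at hstep
  have hab := fallingAbel_succ_sub_fallingAbel_add_one (a + b) (∑ j ∈ insert n T, μ j) #T
  simp only [hurwitzDefect, Pi.add_apply, sum_add_distrib, sum_pi_single', mem_insert_self,
    if_true, card_insert_of_notMem hn] at hab ⊢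
  linear_combination hstep - hab

lemma hurwitzDefect_eq_zero_of_eqOn_one (S : Finset ι) {ρ : ι → ℤ} (hρ : ∀ i ∈ S, ρ i = 1) :
    hurwitzDefect a b S ρ = 0 := by
  have hsum : ∀ A ⊆ S, ∑ i ∈ A, ρ i = #A := fun A hA => by
    rw [sum_congr rfl fun i hi => hρ i (hA hi)]
    simp
  have hterm : ∀ A ∈ S.powerset, fallingAbel a (∑ i ∈ A, ρ i) #A
      * fallingAbel b (∑ i ∈ S \ A, ρ i) #(S \ A)
        = (descPochhammer ℤ #A).eval a * (descPochhammer ℤ (#S - #A)).eval b := by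
    intro A hA
    rw [hsum A (mem_powerset.mp hA), hsum _ sdiff_subset, fallingAbel_self, fallingAbel_self,
      card_sdiff_of_subset (mem_powerset.mp hA)]
  rw [hurwitzDefect, hurwitzSum, hsum S subset_rfl, fallingAbel_self, sum_congr rfl hterm,
    sum_powerset_apply_card
      (fun m => (descPochhammer ℤ m).eval a * (descPochhammer ℤ (#S - m)).eval b),
    Polynomial.eval_eq_smeval, Ring.descPochhammer_smeval_add _ (Commute.all a b),
    Nat.sum_antidiagonal_eq_sum_range_succ (fun i j => ((#S).choose i : ℤ)
      * ((descPochhammer ℤ i).smeval a * (descPochhammer ℤ j).smeval b))]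
  simp [Polynomial.eval_eq_smeval]

theorem fallingAbel_add_eq_hurwitzSum (S : Finset ι) (μ : ι → ℤ) :
    fallingAbel (a + b) (∑ i ∈ S, μ i) #S = hurwitzSum a b S μ := by
  induction S using Finset.strongInduction generalizing μ with
  | H S ih =>
    have hper : ∀ n ∈ S, Function.Periodic (hurwitzDefect a b S) (Pi.single n 1) := by
      intro n hn ρ
      have h := hurwitzDefect_add_single a b (notMem_erase n S) (ih _ (erase_ssubset hn)) ρ
      rwa [insert_erase hn] at h
    have hone : ∀ i ∈ S, (μ + ∑ j ∈ S, Pi.single j (1 - μ j)) i = 1 := fun i hi => by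
      simp [Finset.sum_apply, hi]
    have h := Function.periodic_sum_pi_single hper (fun i => 1 - μ i) μ
    rwa [hurwitzDefect_eq_zero_of_eqOn_one a b S hone, hurwitzDefect, eq_comm, sub_eq_zero] at h

theorem fallingAbel_add_eq_add_add_sum_proper [Fintype ι] [Nonempty ι] (μ : ι → ℤ) :
    fallingAbel (a + b) (∑ i, μ i) (Fintype.card ι)
      = fallingAbel a (∑ i, μ i) (Fintype.card ι) + fallingAbel b (∑ i, μ i) (Fintype.card ι)
        + ∑ A ∈ univ.filter (fun A : Finset ι => A.Nonempty ∧ Aᶜ.Nonempty),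
          fallingAbel a (∑ i ∈ A, μ i) #A * fallingAbel b (∑ i ∈ Aᶜ, μ i) #Aᶜ := by
  have h := fallingAbel_add_eq_hurwitzSum a b univ μ
  rw [hurwitzSum, powerset_univ, sum_eq_univ_add_empty_add_sum_proper] at h
  simpa [compl_eq_univ_sdiff, fallingAbel_zero] using h

end Hurwitz

theorem falling_factorial_identity_general (t a b : ℕ) (μ : Fin t → ℕ)
    (hsum : ∑ i, μ i < min a b) :
    (a + b) * Nat.descFactorial (a + b - (∑ i, μ i) + t - 1) (t - 1) =
      a * Nat.descFactorial (a - (∑ i, μ i) + t - 1) (t - 1) +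
        b * Nat.descFactorial (b - (∑ i, μ i) + t - 1) (t - 1) +
        ∑ A ∈ Finset.univ.filter (fun A : Finset (Fin t) => A.Nonempty ∧ Aᶜ.Nonempty),
          a * b * Nat.descFactorial (a - (∑ i ∈ A, μ i) + A.card - 1) (A.card - 1) *
            Nat.descFactorial (b - (∑ i ∈ Aᶜ, μ i) + Aᶜ.card - 1) (Aᶜ.card - 1) := by
  rcases Nat.eq_zero_or_pos t with rfl | ht
  · simp [eq_empty_of_isEmpty]
  have : Nonempty (Fin t) := ⟨⟨0, ht⟩⟩
  have hle (A : Finset (Fin t)) : ∑ i ∈ A, μ i ≤ a ∧ ∑ i ∈ A, μ i ≤ b := by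
    have := sum_le_sum_of_subset (f := μ) (subset_univ A)
    omega
  have hproper : ∀ A ∈ univ.filter (fun A : Finset (Fin t) => A.Nonempty ∧ Aᶜ.Nonempty),
      fallingAbel a (∑ i ∈ A, (μ i : ℤ)) #A * fallingAbel b (∑ i ∈ Aᶜ, (μ i : ℤ)) #Aᶜ
        = ((a * b * (a - ∑ i ∈ A, μ i + #A - 1).descFactorial (#A - 1)
          * (b - ∑ i ∈ Aᶜ, μ i + #Aᶜ - 1).descFactorial (#Aᶜ - 1) : ℕ) : ℤ) := by
    intro A hA
    obtain ⟨hA, hAc⟩ := (mem_filter.mp hA).2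
    rw [← Nat.cast_sum, ← Nat.cast_sum, fallingAbel_natCast (hle A).1 hA.card_pos,
      fallingAbel_natCast (hle Aᶜ).2 hAc.card_pos]
    push_cast
    ring
  have key := fallingAbel_add_eq_add_add_sum_proper (a : ℤ) b (fun i => (μ i : ℤ))
  rw [← Nat.cast_add, ← Nat.cast_sum, Fintype.card_fin, fallingAbel_natCast (by omega) ht,
    fallingAbel_natCast (hle univ).1 ht, fallingAbel_natCast (hle univ).2 ht,
    sum_congr rfl hproper] at key
  exact_mod_cast key

/-- Falling factorial identity: for positive integers `a, b, μ_1, …, μ_t` with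
`μ_1 + ⋯ + μ_t < min(a,b)`,
`(a+b)·(a+b−μ_{[t]}+t−1)_{t−1} = a·(a−μ_{[t]}+t−1)_{t−1} + b·(b−μ_{[t]}+t−1)_{t−1}
  + ∑_{[t]=A⊔B, A,B≠∅} ab·(a−μ_A+|A|−1)_{|A|−1}·(b−μ_B+|B|−1)_{|B|−1}`,
where `(x)_m = x(x−1)⋯(x−m+1)` is the falling factorial, `μ_S = ∑_{i∈S} μ_i`, and the sum
runs over ordered partitions of `[t]` into two nonempty sets. -/
theorem falling_factorial_identity (t a b : ℕ) (μ : Fin t → ℕ)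
    (ha : 0 < a) (hb : 0 < b) (hμ : ∀ i, 0 < μ i) (hsum : ∑ i, μ i < min a b) :
    (a + b) * Nat.descFactorial (a + b - (∑ i, μ i) + t - 1) (t - 1) =
      a * Nat.descFactorial (a - (∑ i, μ i) + t - 1) (t - 1) +
        b * Nat.descFactorial (b - (∑ i, μ i) + t - 1) (t - 1) +
        ∑ A ∈ Finset.univ.filter (fun A : Finset (Fin t) => A.Nonempty ∧ Aᶜ.Nonempty),
          a * b * Nat.descFactorial (a - (∑ i ∈ A, μ i) + A.card - 1) (A.card - 1) *
            Nat.descFactorial (b - (∑ i ∈ Aᶜ, μ i) + Aᶜ.card - 1) (Aᶜ.card - 1) :=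
  falling_factorial_identity_general t a b μ hsum
end

section
/- The conjugacy-class average of the excedance statistic satisfies R exc = (n − m_1)/2 as a function on S_n: for any w ∈ S_n, the average of exc over the conjugacy class of w equals (n − m_1(w))/2, where m_1(w) is the number of fixed points of w. -/
open Finset

/-- The excedance statistic: `exc(w) = #{i : w(i) > i}`. -/
def excStat {n : ℕ} (w : Equiv.Perm (Fin n)) : ℕ :=
  (Finset.univ.filter (fun i : Fin n => i < w i)).card

/-- The number of fixed points `m_1(w)` of a permutation `w`. -/
def numFixed {n : ℕ} (w : Equiv.Perm (Fin n)) : ℕ :=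
  (Finset.univ.filter (fun i : Fin n => w i = i)).card

/-- The Reynolds operator: `R f(w) = (1/n!) ∑_{v ∈ S_n} f(v⁻¹ w v)`. -/
noncomputable def reynolds {n : ℕ} (f : Equiv.Perm (Fin n) → ℝ)
    (w : Equiv.Perm (Fin n)) : ℝ :=
  (n.factorial : ℝ)⁻¹ * ∑ v : Equiv.Perm (Fin n), f (v⁻¹ * w * v)

/-!
Every permutation is conjugate to its inverse (same cycle type), so averaging over a conjugacy
class does not distinguish `exc` from `u ↦ exc u⁻¹`, the number of deficiencies `#{i : u i < i}`.
Every point is an excedance, a deficiency or a fixed point, so `exc u + exc u⁻¹ = n - m_1(u)`,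
a class function; hence twice the class average of `exc` is `n - m_1(w)`.
-/

theorem Fintype.sum_conj_eq_of_isConj {G M : Type*} [Group G] [Fintype G] [AddCommMonoid M]
    (f : G → M) {a b : G} (h : IsConj a b) :
    ∑ v, f (v⁻¹ * a * v) = ∑ v, f (v⁻¹ * b * v) := by
  obtain ⟨c, rfl⟩ := isConj_iff.mp h
  exact Fintype.sum_equiv (Equiv.mulLeft c) _ _ fun v => by simp [mul_assoc]

theorem Equiv.Perm.isConj_inv_self {α : Type*} [Fintype α] [DecidableEq α] (σ : Equiv.Perm α) :
    IsConj σ⁻¹ σ :=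
  Equiv.Perm.isConj_iff_cycleType_eq.mpr (Equiv.Perm.cycleType_inv σ)

section Reynolds

variable {n : ℕ}

theorem reynolds_add (f g : Equiv.Perm (Fin n) → ℝ) (w : Equiv.Perm (Fin n)) :
    reynolds (f + g) w = reynolds f w + reynolds g w := by
  simp only [reynolds, Pi.add_apply, sum_add_distrib, mul_add]

theorem reynolds_comp_inv (f : Equiv.Perm (Fin n) → ℝ) (w : Equiv.Perm (Fin n)) :
    reynolds (fun u => f u⁻¹) w = reynolds f w := by
  simp only [reynolds, mul_inv_rev, inv_inv, ← mul_assoc]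
  rw [Fintype.sum_conj_eq_of_isConj f w.isConj_inv_self]

theorem reynolds_eq_self_of_conj_invariant (f : Equiv.Perm (Fin n) → ℝ) (w : Equiv.Perm (Fin n))
    (hf : ∀ v, f (v⁻¹ * w * v) = f w) : reynolds f w = f w := by
  simp only [reynolds, hf, sum_const, card_univ, Fintype.card_perm, Fintype.card_fin, nsmul_eq_mul]
  field_simp

end Reynolds

section Statistics

variable {n : ℕ}

theorem excStat_inv (u : Equiv.Perm (Fin n)) :
    excStat u⁻¹ = #{i | u i < i} :=
  card_bij (fun i _ => u⁻¹ i) (by simp) (fun _ _ _ _ h => u⁻¹.injective h)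
    fun b hb => ⟨u b, by simpa using hb, by simp⟩

theorem excStat_add_excStat_inv_add_numFixed (u : Equiv.Perm (Fin n)) :
    excStat u + excStat u⁻¹ + numFixed u = n := by
  rw [excStat_inv]
  simp only [excStat, numFixed, card_filter, ← sum_add_distrib]
  calc ∑ i : Fin n, ((if i < u i then 1 else 0) + (if u i < i then 1 else 0) +
        (if u i = i then 1 else 0))
      = ∑ _i : Fin n, 1 := sum_congr rfl fun i _ => by split_ifs <;> omega
    _ = n := by simp

theorem numFixed_add_card_support (u : Equiv.Perm (Fin n)) : numFixed u + #u.support = n := by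
  rw [numFixed, Equiv.Perm.support, card_filter_add_card_filter_not, card_univ, Fintype.card_fin]

theorem numFixed_conj (v w : Equiv.Perm (Fin n)) : numFixed (v⁻¹ * w * v) = numFixed w := by
  have hsupp : #(v⁻¹ * w * v).support = #w.support := by
    simpa using Equiv.Perm.card_support_conj (σ := v⁻¹) (τ := w)
  have h₁ := numFixed_add_card_support (v⁻¹ * w * v)
  have h₂ := numFixed_add_card_support w
  omega

end Statistics

/-- `R exc = (n − m_1)/2`: the average of the excedance statistic over the conjugacy class
of any `w ∈ S_n` is `(n − m_1(w))/2`, where `m_1(w)` is the number of fixed points. -/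
theorem reynolds_exc {n : ℕ} (w : Equiv.Perm (Fin n)) :
    reynolds (fun u => (excStat u : ℝ)) w = ((n : ℝ) - numFixed w) / 2 := by
  set exc : Equiv.Perm (Fin n) → ℝ := fun u => excStat u
  have hclass : exc + (fun u => exc u⁻¹) = fun u => (n : ℝ) - numFixed u := by
    funext u
    have h : ((excStat u + excStat u⁻¹ + numFixed u : ℕ) : ℝ) = n := by
      rw [excStat_add_excStat_inv_add_numFixed]
    push_cast at h
    simp only [Pi.add_apply, exc]
    linarith
  have htwice := reynolds_add exc (fun u => exc u⁻¹) w
  rw [hclass, reynolds_comp_inv,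
    reynolds_eq_self_of_conj_invariant _ w fun v => by rw [numFixed_conj]] at htwice
  linarith
end
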